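/- arXiv:1107.1063 — 11 statements merged into one kernel-verified Lean document; each statement's English description precedes it below -/
import Mathlib

section
/- For all integers m and r with 0 ≤ r and 2r + 2 ≤ m, one has S(m,r) = T(m−1−r, r) = U(m−1−r, r) = W(m−1−r, r), and if moreover r ≥ 1, these quantities also equal V(m−1−r, r). -/
open Finset

/-- `S n r = ∑_{i=r+1}^{⌊n/2⌋} C(n,2i)·C(i−1,r)`. -/
def S (n r : ℕ) : ℕ := ∑ i ∈ Icc (r + 1) (n / 2), n.choose (2 * i) * (i - 1).choose r

/-- `T n r = ∑_{j=r+1}^{n} C(n,j)·C(j−1,r)`. -/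
def T (n r : ℕ) : ℕ := ∑ j ∈ Icc (r + 1) n, n.choose j * (j - 1).choose r

/-- `U n r = ∑_{j=r+1}^{n} C(j−1,r)·2^{j−1−r}`. -/
def U (n r : ℕ) : ℕ := ∑ j ∈ Icc (r + 1) n, (j - 1).choose r * 2 ^ (j - 1 - r)

/-- `V n r = ∑_{j=1}^{n−r} C(n−1−j,r−1)·2^{n−r−j}·(2^j−1)`. -/
def V (n r : ℕ) : ℕ :=
  ∑ j ∈ Icc 1 (n - r), (n - 1 - j).choose (r - 1) * 2 ^ (n - r - j) * (2 ^ j - 1)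

/-- `W n r = 2^{n−r}·∑_{k=0}^{⌊r/2⌋} C(n−2−2k,r−2k) + (−1)^{r+1}` as an integer. -/
def W (n r : ℕ) : ℤ :=
  2 ^ (n - r) * ∑ k ∈ range (r / 2 + 1), ((n - 2 - 2 * k).choose (r - 2 * k) : ℤ)
    + (-1) ^ (r + 1)

/-!
`S (n + r + 1) r`, `T n r` and `U n r` all satisfy the recurrence
`f 0 r = 0`, `f (n + 1) 0 = 2 f n 0 + 1`, `f (n + 1) (r + 1) = 2 f n (r + 1) + f n r`,
which determines `f`. For `U` this follows from `U (n + 1) r = U n r + C(n, r) 2^(n - r)`; for `T`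
and `S` from Pascal's rule, applied once to the weight `C(n, j)` of `T` and twice to the weight
`C(m, 2i)` of `S` (in the form `C(m+2, k+2) + C(m, k+2) = C(m, k) + 2 C(m+1, k+2)`), together with
`C(i, r + 1) = C(i - 1, r) + C(i - 1, r + 1)`.

Both `U (n + 1) (r + 1)` and `V (n + 1) (r + 1)` complete `U n r` to `C(n, r + 1) 2^(n - r)`,
for `V` by reflecting its sum and the hockey-stick identity. Finally `U` and `W` agree on the
diagonal `n = r + 1` and grow alike in `n`, because the inner sum `Wsum` of `W` satisfies
`2 Wsum (n + 1) r = Wsum n r + C(n, r)`.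
-/

section IccSums

variable {M : Type*} [AddCommMonoid M]

lemma sum_Icc_add_one_add_one (f : ℕ → M) (a b : ℕ) :
    ∑ i ∈ Icc (a + 1) (b + 1), f i = ∑ i ∈ Icc a b, f (i + 1) := by
  rw [← map_add_right_Icc, sum_map]
  rfl

lemma sum_Icc_eq_sum_Icc_of_eq_zero {f : ℕ → M} {a N N' : ℕ} (hN : N ≤ N')
    (hf : ∀ i, N < i → f i = 0) : ∑ i ∈ Icc a N', f i = ∑ i ∈ Icc a N, f i := by
  refine (sum_subset (Icc_subset_Icc_right hN) fun i hi hi' => hf i ?_).symm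
  simp only [mem_Icc] at hi hi'
  omega

lemma sum_Icc_one_reflect (f : ℕ → M) {n r : ℕ} (h : r < n) :
    ∑ j ∈ Icc 1 (n - r), f (n - j) = ∑ i ∈ Icc r (n - 1), f i :=
  sum_nbij' (n - ·) (n - ·) (fun j hj => by simp only [mem_Icc] at *; omega)
    (fun i hi => by simp only [mem_Icc] at *; omega)
    (fun j hj => by simp only [mem_Icc] at *; omega)
    (fun i hi => by simp only [mem_Icc] at *; omega) fun _ _ => rfl

end IccSums

lemma Nat.choose_add_two_add (m k : ℕ) :
    (m + 2).choose (k + 2) + m.choose (k + 2) = m.choose k + 2 * (m + 1).choose (k + 2) := by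
  simp only [Nat.choose_succ_succ']
  ring

lemma Nat.choose_succ_mul_two_pow (n r : ℕ) :
    n.choose (r + 1) * 2 ^ (n - r) = 2 * (n.choose (r + 1) * 2 ^ (n - (r + 1))) := by
  rcases le_or_gt (r + 1) n with h | h
  · rw [show n - r = n - (r + 1) + 1 by omega, pow_succ]
    ring
  · simp [Nat.choose_eq_zero_of_lt h]

lemma sum_Icc_mul_choose_succ (w : ℕ → ℕ) (r N : ℕ) :
    ∑ i ∈ Icc (r + 1) N, w i * i.choose (r + 1) =
      ∑ i ∈ Icc (r + 1) N, w i * (i - 1).choose r +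
        ∑ i ∈ Icc (r + 1 + 1) N, w i * (i - 1).choose (r + 1) := by
  have hpascal : ∀ i ∈ Icc (r + 1) N,
      w i * i.choose (r + 1) = w i * (i - 1).choose r + w i * (i - 1).choose (r + 1) := by
    intro i hi
    obtain ⟨j, rfl⟩ : ∃ j, i = j + 1 := ⟨i - 1, by simp only [mem_Icc] at hi; omega⟩
    rw [Nat.choose_succ_succ, Nat.add_sub_cancel, mul_add]
  rw [sum_congr rfl hpascal, sum_add_distrib]
  congr 1
  refine (sum_subset (Icc_subset_Icc_left (Nat.le_succ _)) fun i hi hi' => ?_).symm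
  simp only [mem_Icc] at hi hi'
  rw [Nat.choose_eq_zero_of_lt (by omega), mul_zero]

lemma sum_Icc_mul_choose_zero (w : ℕ → ℕ) (N : ℕ) :
    ∑ i ∈ Icc 0 N, w i * i.choose 0 =
      w 0 + ∑ i ∈ Icc (0 + 1) N, w i * (i - 1).choose 0 := by
  simp only [Nat.choose_zero_right, mul_one]
  rw [← insert_Icc_add_one_left_eq_Icc N.zero_le, sum_insert (by simp)]

lemma U_zero (r : ℕ) : U 0 r = 0 := by
  simp [U]

lemma U_succ (n r : ℕ) : U (n + 1) r = U n r + n.choose r * 2 ^ (n - r) := by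
  rcases le_or_gt r n with h | h
  · rw [U, sum_Icc_succ_top (by omega), Nat.add_sub_cancel, ← U]
  · rw [U, U, Icc_eq_empty (by omega), Icc_eq_empty (by omega), Nat.choose_eq_zero_of_lt h]
    simp

lemma U_zero_right_add_one (n : ℕ) : U n 0 + 1 = 2 ^ n := by
  induction n with
  | zero => simp [U_zero]
  | succ n ih => rw [U_succ, Nat.choose_zero_right, Nat.sub_zero, pow_succ, ← ih]; ring

lemma U_succ_zero (n : ℕ) : U (n + 1) 0 = 2 * U n 0 + 1 := by
  have h := U_zero_right_add_one (n + 1)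
  rw [pow_succ, ← U_zero_right_add_one n] at h
  omega

lemma U_succ_succ (n r : ℕ) : U (n + 1) (r + 1) = 2 * U n (r + 1) + U n r := by
  induction n with
  | zero => simp [U_succ, U_zero]
  | succ n ih =>
    have hstep := U_succ n (r + 1)
    rw [U_succ (n + 1), U_succ n r, Nat.add_sub_add_right, Nat.choose_succ_succ', add_mul,
      Nat.choose_succ_mul_two_pow n r]
    linarith

lemma eq_U_of_recurrence {f : ℕ → ℕ → ℕ} (h0 : ∀ r, f 0 r = 0)
    (h1 : ∀ n, f (n + 1) 0 = 2 * f n 0 + 1)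
    (h2 : ∀ n r, f (n + 1) (r + 1) = 2 * f n (r + 1) + f n r) (n r : ℕ) : f n r = U n r := by
  induction n generalizing r with
  | zero => rw [h0, U_zero]
  | succ n ih =>
    cases r with
    | zero => rw [h1, U_succ_zero, ih]
    | succ r => rw [h2, U_succ_succ, ih, ih]

lemma U_succ_succ_add (n r : ℕ) : U (n + 1) (r + 1) + U n r = n.choose (r + 1) * 2 ^ (n - r) := by
  induction n with
  | zero => simp [U_succ, U_zero]
  | succ n ih =>
    rw [U_succ (n + 1), U_succ n r, Nat.add_sub_add_right,
      Nat.choose_succ_mul_two_pow (n + 1), Nat.add_sub_add_right, Nat.choose_succ_succ' n r,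
      add_mul]
    linarith

lemma T_succ (n r : ℕ) :
    T (n + 1) r = T n r + ∑ j ∈ Icc r n, n.choose j * j.choose r := by
  have hpascal : ∀ j ∈ Icc (r + 1) (n + 1), (n + 1).choose j * (j - 1).choose r =
      n.choose (j - 1) * (j - 1).choose r + n.choose j * (j - 1).choose r := by
    intro j hj
    obtain ⟨i, rfl⟩ : ∃ i, j = i + 1 := ⟨j - 1, by simp only [mem_Icc] at hj; omega⟩
    rw [Nat.choose_succ_succ, Nat.add_sub_cancel, add_mul]
  rw [T, sum_congr rfl hpascal, sum_add_distrib, sum_Icc_add_one_add_one, add_comm, T,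
    sum_Icc_eq_sum_Icc_of_eq_zero (N := n) n.le_succ fun j hj => by
      rw [Nat.choose_eq_zero_of_lt hj, zero_mul]]
  simp only [Nat.add_sub_cancel]

lemma T_succ_zero (n : ℕ) : T (n + 1) 0 = 2 * T n 0 + 1 := by
  rw [T_succ, sum_Icc_mul_choose_zero, Nat.choose_zero_right, ← T]
  ring

lemma T_succ_succ (n r : ℕ) : T (n + 1) (r + 1) = 2 * T n (r + 1) + T n r := by
  rw [T_succ, sum_Icc_mul_choose_succ, ← T, ← T]
  ring

lemma T_eq_U (n r : ℕ) : T n r = U n r :=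
  eq_U_of_recurrence (fun r => by simp [T]) T_succ_zero T_succ_succ n r

lemma S_eq_sum_Icc_of_le {m N : ℕ} (r : ℕ) (hN : m / 2 ≤ N) :
    S m r = ∑ i ∈ Icc (r + 1) N, m.choose (2 * i) * (i - 1).choose r :=
  (sum_Icc_eq_sum_Icc_of_eq_zero hN fun i hi => by
    rw [Nat.choose_eq_zero_of_lt (by omega), zero_mul]).symm

lemma S_add_two_add (m r : ℕ) :
    S (m + 2) r + S m r =
      2 * S (m + 1) r + ∑ j ∈ Icc r (m / 2), m.choose (2 * j) * j.choose r := by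
  have hshift : ∑ j ∈ Icc r (m / 2), m.choose (2 * j) * j.choose r =
      ∑ i ∈ Icc (r + 1) (m / 2 + 1), m.choose (2 * i - 2) * (i - 1).choose r := by
    rw [sum_Icc_add_one_add_one]
    refine sum_congr rfl fun j _ => ?_
    rw [show 2 * (j + 1) - 2 = 2 * j by omega, Nat.add_sub_cancel]
  rw [S_eq_sum_Icc_of_le (N := m / 2 + 1) r (by omega),
    S_eq_sum_Icc_of_le (N := m / 2 + 1) r (by omega),
    S_eq_sum_Icc_of_le (N := m / 2 + 1) r (by omega), hshift, mul_sum, ← sum_add_distrib,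
    ← sum_add_distrib]
  refine sum_congr rfl fun i hi => ?_
  obtain ⟨k, rfl⟩ : ∃ k, i = k + 1 := ⟨i - 1, by simp only [mem_Icc] at hi; omega⟩
  have h := Nat.choose_add_two_add m (2 * k)
  rw [show 2 * (k + 1) = 2 * k + 2 by ring, show 2 * k + 2 - 2 = 2 * k by omega, ← add_mul, h]
  ring

lemma S_add_two_zero (m : ℕ) : S (m + 2) 0 = 2 * S (m + 1) 0 + 1 := by
  have h := S_add_two_add m 0
  rw [sum_Icc_mul_choose_zero, Nat.choose_zero_right, ← S] at h
  omega

lemma S_add_two_succ (m r : ℕ) : S (m + 2) (r + 1) = 2 * S (m + 1) (r + 1) + S m r := by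
  have h := S_add_two_add m (r + 1)
  rw [sum_Icc_mul_choose_succ, ← S, ← S] at h
  omega

lemma S_eq_U (n r : ℕ) : S (n + r + 1) r = U n r := by
  refine eq_U_of_recurrence (f := fun n r => S (n + r + 1) r) (fun r => ?_) (fun n => ?_)
    (fun n r => ?_) n r
  · rw [S, Icc_eq_empty (by omega), sum_empty]
  · exact S_add_two_zero n
  · rw [show n + 1 + (r + 1) + 1 = n + r + 1 + 2 by ring, S_add_two_succ]
    ring_nf

lemma V_succ_succ_add {n r : ℕ} (h : r < n) :
    V (n + 1) (r + 1) + U n r = n.choose (r + 1) * 2 ^ (n - r) := by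
  have hU : U n r = ∑ j ∈ Icc 1 (n - r), (n - j).choose r * 2 ^ (n - r - j) := by
    have hshift : U n r = ∑ i ∈ Icc r (n - 1), i.choose r * 2 ^ (i - r) := by
      obtain ⟨k, rfl⟩ : ∃ k, n = k + 1 := ⟨n - 1, by omega⟩
      rw [U, sum_Icc_add_one_add_one]
      simp only [Nat.add_sub_cancel]
    rw [hshift, ← sum_Icc_one_reflect _ h]
    exact sum_congr rfl fun j _ => by rw [Nat.sub_right_comm]
  have hhockey : ∑ j ∈ Icc 1 (n - r), (n - j).choose r = n.choose (r + 1) := by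
    rw [sum_Icc_one_reflect (fun i => i.choose r) h, Nat.sum_Icc_choose, Nat.sub_add_cancel h.pos]
  have hterm : ∀ j ∈ Icc 1 (n - r), (n - j).choose r * 2 ^ (n - r - j) * (2 ^ j - 1) +
      (n - j).choose r * 2 ^ (n - r - j) = (n - j).choose r * 2 ^ (n - r) := by
    intro j hj
    simp only [mem_Icc] at hj
    rw [← mul_add_one, Nat.sub_add_cancel Nat.one_le_two_pow, mul_assoc, ← pow_add,
      Nat.sub_add_cancel hj.2]
  rw [V, hU, Nat.add_sub_add_right, Nat.add_sub_cancel, Nat.add_sub_cancel, ← sum_add_distrib,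
    sum_congr rfl hterm, ← sum_mul, hhockey]

lemma U_eq_V {n r : ℕ} (h : r < n) : U (n + 1) (r + 1) = V (n + 1) (r + 1) := by
  have hU := U_succ_succ_add n r
  have hV := V_succ_succ_add h
  omega

def Wsum (n r : ℕ) : ℕ := ∑ k ∈ range (r / 2 + 1), (n - 2 - 2 * k).choose (r - 2 * k)

lemma W_eq (n r : ℕ) : W n r = 2 ^ (n - r) * (Wsum n r : ℤ) + (-1) ^ (r + 1) := by
  simp [W, Wsum]

lemma Wsum_add_two (n r : ℕ) : Wsum n (r + 2) = (n - 2).choose (r + 2) + Wsum (n - 2) r := by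
  rw [Wsum, Wsum, show (r + 2) / 2 + 1 = r / 2 + 1 + 1 by omega, sum_range_succ', add_comm]
  congr 1
  exact sum_congr rfl fun k _ => by congr 1 <;> omega

lemma two_mul_Wsum_succ {n r : ℕ} (hn : r < n) :
    2 * Wsum (n + 1) r = Wsum n r + n.choose r := by
  induction r using Nat.twoStepInduction generalizing n with
  | zero => simp [Wsum]
  | one => simp [Wsum, Nat.choose_one_right]; omega
  | more r ih _ =>
    obtain ⟨a, rfl⟩ : ∃ a, n = a + 2 := ⟨n - 2, by omega⟩
    have ih' := ih (n := a) (by omega)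
    have hpascal := Nat.choose_add_two_add a r
    rw [Wsum_add_two, Wsum_add_two, show a + 2 + 1 - 2 = a + 1 by omega, Nat.add_sub_cancel]
    omega

lemma W_succ_self (r : ℕ) : W (r + 1) r = 1 := by
  induction r using Nat.twoStepInduction with
  | zero => simp [W_eq, Wsum]
  | one => simp [W_eq, Wsum]
  | more r ih _ =>
    rw [W_eq] at ih ⊢
    rw [show r + 2 + 1 - (r + 2) = r + 1 - r by omega, show r + 2 + 1 = r + 1 + 2 by ring,
      Wsum_add_two, Nat.add_sub_cancel, Nat.choose_eq_zero_of_lt (by omega), zero_add]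
    linear_combination ih

lemma U_eq_W {n r : ℕ} (h : r < n) : (U n r : ℤ) = W n r := by
  induction n, h using Nat.le_induction with
  | base => rw [W_succ_self]; simp [U]
  | succ n hn ih =>
    have hdouble : (2 * Wsum (n + 1) r : ℤ) = Wsum n r + n.choose r := by
      exact_mod_cast two_mul_Wsum_succ hn
    rw [U_succ, W_eq, show n + 1 - r = n - r + 1 by omega, pow_succ]
    push_cast
    rw [ih, W_eq]
    linear_combination -(2 : ℤ) ^ (n - r) * hdouble

theorem main_identities (m r : ℕ) (h : 2 * r + 2 ≤ m) :
    S m r = T (m - 1 - r) r ∧ T (m - 1 - r) r = U (m - 1 - r) r ∧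
      (S m r : ℤ) = W (m - 1 - r) r ∧
      (1 ≤ r → U (m - 1 - r) r = V (m - 1 - r) r) := by
  obtain ⟨n, rfl⟩ : ∃ n, m = n + r + 1 := ⟨m - 1 - r, by omega⟩
  rw [show n + r + 1 - 1 - r = n by omega]
  refine ⟨by rw [S_eq_U, T_eq_U], T_eq_U n r, by rw [S_eq_U]; exact U_eq_W (by omega),
    fun hr => ?_⟩
  obtain ⟨s, rfl⟩ : ∃ s, r = s + 1 := ⟨r - 1, by omega⟩
  obtain ⟨k, rfl⟩ : ∃ k, n = k + 1 := ⟨n - 1, by omega⟩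
  exact U_eq_V (by omega)
end

section
/- For all integers m and r with 0 ≤ r and 2r + 2 ≤ m, the following identity holds in the integers: Σ_{i=r+1}^{⌊m/2⌋} C(m,2i)·C(i−1,r) = 2^{m−1−2r}·Σ_{k=0}^{⌊r/2⌋} C(m−3−r−2k, r−2k) + (−1)^{r+1}. -/
/-!
Write `S_j(m, r) = ∑ᵢ C(m, 2i + j) C(i, r)`, so that the left-hand side is `S_2(m, r)`. Pascal's
rule in `m` gives `S_{j+1}(m+1, r) = S_j(m, r) + S_{j+1}(m, r)` and Pascal's rule in `i` gives
`S_j(m, r+1) = S_{j+2}(m, r) + S_{j+2}(m, r+1)`. Eliminating `S_0` and `S_2` leaves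
`S_1(m+2, r+1) = 2 S_1(m+1, r+1) + S_1(m, r)`, whence `S_1(m, r) = 2^(m-1-2r) C(m-1-r, r)`.
So `S_2(m+1, r) - S_2(m, r) = 2^(m-1-2r) C(m-1-r, r)`, and the right-hand side obeys the same
difference equation because `D(N, r) = ∑ₖ C(N-2k, r-2k)` satisfies
`C(M+1, r) + D(M-1, r) = 2 D(M, r)`. At `m = 2r + 2` both sides are `1`: with truncated
subtraction `D(r-1, r)` is `1` for even `r` and `0` for odd `r`, and the sign `(-1)^(r+1)`
compensates.
-/

open Finset

def diagChooseSum (N r : ℕ) : ℕ :=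
  ∑ k ∈ range (r / 2 + 1), (N - 2 * k).choose (r - 2 * k)

namespace diagChooseSum

theorem zero_right (N : ℕ) : diagChooseSum N 0 = 1 := by
  simp [diagChooseSum]

theorem one_right (N : ℕ) : diagChooseSum N 1 = N := by
  simp [diagChooseSum]

theorem add_two_right (N r : ℕ) :
    diagChooseSum N (r + 2) = N.choose (r + 2) + diagChooseSum (N - 2) r := by
  rw [diagChooseSum, show (r + 2) / 2 + 1 = r / 2 + 1 + 1 by omega, sum_range_succ']
  simp only [mul_zero, Nat.sub_zero, add_comm (N.choose _)]
  refine congrArg (· + _) (sum_congr rfl fun k _ => ?_)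
  rw [show N - 2 * (k + 1) = N - 2 - 2 * k by omega,
    show r + 2 - 2 * (k + 1) = r - 2 * k by omega]

theorem two_mul_pred_self (r : ℕ) : 2 * (diagChooseSum (r - 1) r : ℤ) = 1 + (-1) ^ r := by
  induction r using Nat.twoStepInduction with
  | zero => simp [zero_right]
  | one => simp [one_right]
  | more r ih _ =>
    rw [add_two_right, Nat.choose_eq_zero_of_lt (by omega), show r + 2 - 1 - 2 = r - 1 by omega]
    push_cast
    linear_combination ih

theorem choose_succ_add_pred {M r : ℕ} (h : r ≤ M) :
    (M + 1).choose r + diagChooseSum (M - 1) r = 2 * diagChooseSum M r := by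
  induction r using Nat.twoStepInduction generalizing M with
  | zero => simp [zero_right]
  | one => simp only [one_right, Nat.choose_one_right]; omega
  | more r ih _ =>
    obtain ⟨M, rfl⟩ : ∃ M', M = M' + 2 := ⟨M - 2, by omega⟩
    have ih := ih (by omega : r ≤ M)
    have p₁ : (M + 2 + 1).choose (r + 2) = (M + 2).choose (r + 1) + (M + 2).choose (r + 2) :=
      Nat.choose_succ_succ' _ _
    have p₂ : (M + 2).choose (r + 1) = (M + 1).choose r + (M + 1).choose (r + 1) :=
      Nat.choose_succ_succ' _ _
    have p₃ : (M + 2).choose (r + 2) = (M + 1).choose (r + 1) + (M + 1).choose (r + 2) :=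
      Nat.choose_succ_succ' _ _
    rw [add_two_right, add_two_right, show M + 2 - 1 = M + 1 by omega,
      show M + 1 - 2 = M - 1 by omega, show M + 2 - 2 = M by omega]
    omega

end diagChooseSum

def stridedChooseSum (m j r : ℕ) : ℕ :=
  ∑ i ∈ range (m + 1), m.choose (2 * i + j) * i.choose r

namespace stridedChooseSum

theorem eq_sum_range {m n j : ℕ} (h : m < 2 * n + j) (r : ℕ) :
    stridedChooseSum m j r = ∑ i ∈ range n, m.choose (2 * i + j) * i.choose r := by
  rcases le_total n (m + 1) with hn | hn
  · exact eventually_constant_sum (fun i hi => by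
      rw [Nat.choose_eq_zero_of_lt (by omega), zero_mul]) hn
  · exact (eventually_constant_sum (fun i hi => by
      rw [Nat.choose_eq_zero_of_lt (by omega), zero_mul]) hn).symm

theorem eq_zero {m j r : ℕ} (h : m < 2 * r + j) : stridedChooseSum m j r = 0 :=
  sum_eq_zero fun i _ => by
    rcases Nat.lt_or_ge i r with hi | hi
    · rw [Nat.choose_eq_zero_of_lt hi, mul_zero]
    · rw [Nat.choose_eq_zero_of_lt (by omega), zero_mul]

theorem succ_succ (m j r : ℕ) :
    stridedChooseSum (m + 1) (j + 1) r =
      stridedChooseSum m j r + stridedChooseSum m (j + 1) r := by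
  rw [stridedChooseSum, eq_sum_range (n := m + 2) (by omega),
    eq_sum_range (n := m + 2) (by omega), ← sum_add_distrib]
  refine sum_congr rfl fun i _ => ?_
  rw [← add_assoc, Nat.choose_succ_succ', add_mul, add_assoc]

theorem zero_right (m j : ℕ) :
    stridedChooseSum m j 0 = m.choose j + stridedChooseSum m (j + 2) 0 := by
  rw [stridedChooseSum, sum_range_succ', eq_sum_range (n := m) (by omega)]
  simp only [Nat.choose_zero_right, mul_one, mul_zero, zero_add, add_comm (m.choose j)]
  refine congrArg (· + _) (sum_congr rfl fun i _ => ?_)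
  ring_nf

theorem succ_right (m j r : ℕ) :
    stridedChooseSum m j (r + 1) =
      stridedChooseSum m (j + 2) r + stridedChooseSum m (j + 2) (r + 1) := by
  rw [stridedChooseSum, sum_range_succ', eq_sum_range (n := m) (by omega),
    eq_sum_range (n := m) (by omega), ← sum_add_distrib]
  simp only [Nat.choose_zero_succ, mul_zero, add_zero]
  refine sum_congr rfl fun i _ => ?_
  rw [Nat.choose_succ_succ', mul_add]
  ring_nf

theorem add_two_one_zero (m : ℕ) :
    stridedChooseSum (m + 2) 1 0 = 2 * stridedChooseSum (m + 1) 1 0 := by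
  have h₁ : stridedChooseSum (m + 2) 1 0 =
      stridedChooseSum (m + 1) 0 0 + stridedChooseSum (m + 1) 1 0 :=
    succ_succ (m + 1) 0 0
  have h₂ : stridedChooseSum (m + 1) 1 0 = stridedChooseSum m 0 0 + stridedChooseSum m 1 0 :=
    succ_succ m 0 0
  have h₃ : stridedChooseSum (m + 1) 2 0 = stridedChooseSum m 1 0 + stridedChooseSum m 2 0 :=
    succ_succ m 1 0
  have h₄ : stridedChooseSum (m + 1) 0 0 = 1 + stridedChooseSum (m + 1) 2 0 := by
    simpa using zero_right (m + 1) 0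
  have h₅ : stridedChooseSum m 0 0 = 1 + stridedChooseSum m 2 0 := by
    simpa using zero_right m 0
  omega

theorem add_two_one_succ (m r : ℕ) :
    stridedChooseSum (m + 2) 1 (r + 1) =
      2 * stridedChooseSum (m + 1) 1 (r + 1) + stridedChooseSum m 1 r := by
  have h₁ : stridedChooseSum (m + 2) 1 (r + 1) =
      stridedChooseSum (m + 1) 0 (r + 1) + stridedChooseSum (m + 1) 1 (r + 1) :=
    succ_succ (m + 1) 0 (r + 1)
  have h₂ : stridedChooseSum (m + 1) 1 (r + 1) =
      stridedChooseSum m 0 (r + 1) + stridedChooseSum m 1 (r + 1) :=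
    succ_succ m 0 (r + 1)
  have h₃ : stridedChooseSum (m + 1) 2 r = stridedChooseSum m 1 r + stridedChooseSum m 2 r :=
    succ_succ m 1 r
  have h₄ : stridedChooseSum (m + 1) 2 (r + 1) =
      stridedChooseSum m 1 (r + 1) + stridedChooseSum m 2 (r + 1) :=
    succ_succ m 1 (r + 1)
  have h₅ : stridedChooseSum (m + 1) 0 (r + 1) =
      stridedChooseSum (m + 1) 2 r + stridedChooseSum (m + 1) 2 (r + 1) :=
    succ_right (m + 1) 0 r
  have h₆ : stridedChooseSum m 0 (r + 1) =
      stridedChooseSum m 2 r + stridedChooseSum m 2 (r + 1) :=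
    succ_right m 0 r
  omega

theorem one_eq_pow_mul_choose (r n : ℕ) :
    stridedChooseSum (n + 2 * r + 1) 1 r = 2 ^ n * (n + r).choose r := by
  induction r generalizing n with
  | zero =>
    induction n with
    | zero => decide
    | succ n ih =>
      simp only [Nat.choose_zero_right, mul_one] at ih ⊢
      rw [add_two_one_zero, ih, pow_succ, mul_comm]
  | succ r ihr =>
    induction n with
    | zero =>
      rw [show 0 + 2 * (r + 1) + 1 = 2 * r + 1 + 2 by ring, add_two_one_succ, eq_zero (by omega)]
      simpa using ihr 0
    | succ n ih =>
      rw [show n + 1 + 2 * (r + 1) + 1 = n + 1 + 2 * r + 1 + 2 by ring, add_two_one_succ,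
        show n + 1 + 2 * r + 1 + 1 = n + 2 * (r + 1) + 1 by ring, ih, ihr,
        show n + 1 + (r + 1) = n + (r + 1) + 1 by ring, Nat.choose_succ_succ' (n + (r + 1)),
        show n + 1 + r = n + (r + 1) by ring]
      ring

theorem cast_two_eq (n r : ℕ) :
    (stridedChooseSum (n + 2 * r + 2) 2 r : ℤ) =
      2 ^ (n + 1) * diagChooseSum (n + r - 1) r + (-1) ^ (r + 1) := by
  induction n with
  | zero =>
    have hbase : stridedChooseSum (2 * r + 2) 2 r = 1 := by
      rw [succ_succ, eq_zero (by omega : 2 * r + 1 < 2 * r + 2), ← zero_add (2 * r),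
        one_eq_pow_mul_choose]
      simp
    simp only [zero_add, hbase]
    linear_combination -(diagChooseSum.two_mul_pred_self r)
  | succ n ih =>
    have hstep : ((n + r + 1).choose r : ℤ) + diagChooseSum (n + r - 1) r =
        2 * diagChooseSum (n + r) r := by
      exact_mod_cast diagChooseSum.choose_succ_add_pred (by omega : r ≤ n + r)
    rw [show n + 1 + 2 * r + 2 = n + 2 * r + 2 + 1 by ring, succ_succ,
      show n + 2 * r + 2 = n + 1 + 2 * r + 1 by ring, one_eq_pow_mul_choose,
      show n + 1 + 2 * r + 1 = n + 2 * r + 2 by ring, show n + 1 + r - 1 = n + r by omega,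
      show n + 1 + r = n + r + 1 by ring]
    push_cast
    rw [ih, pow_succ]
    linear_combination 2 ^ n * 2 * hstep

theorem two_eq_sum_Icc (m r : ℕ) :
    stridedChooseSum m 2 r = ∑ i ∈ Icc (r + 1) (m / 2), m.choose (2 * i) * (i - 1).choose r := by
  have hsub : Icc (r + 1) (m / 2) ⊆ Ico 1 (m / 2 + 1) := by
    intro i
    simp only [mem_Icc, mem_Ico]
    omega
  rw [sum_subset hsub fun i _ hi => ?_, sum_Ico_eq_sum_range, Nat.add_sub_cancel,
    eq_sum_range (n := m / 2) (by omega)]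
  · refine sum_congr rfl fun i _ => ?_
    rw [add_tsub_cancel_left, add_comm 1, mul_add_one]
  · simp only [mem_Icc, mem_Ico] at *
    rw [Nat.choose_eq_zero_of_lt (n := i - 1) (by omega), mul_zero]

end stridedChooseSum

theorem main_identity (m r : ℕ) (h : 2 * r + 2 ≤ m) :
    (∑ i ∈ Icc (r + 1) (m / 2), (m.choose (2 * i) * (i - 1).choose r : ℤ)) =
      2 ^ (m - 1 - 2 * r) *
        ∑ k ∈ range (r / 2 + 1), ((m - 3 - r - 2 * k).choose (r - 2 * k) : ℤ)
      + (-1) ^ (r + 1) := by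
  obtain ⟨n, rfl⟩ : ∃ n, m = n + 2 * r + 2 := ⟨m - (2 * r + 2), by omega⟩
  rw [show n + 2 * r + 2 - 1 - 2 * r = n + 1 by omega,
    show n + 2 * r + 2 - 3 - r = n + r - 1 by omega]
  have key := stridedChooseSum.cast_two_eq n r
  rw [stridedChooseSum.two_eq_sum_Icc, diagChooseSum] at key
  exact_mod_cast key
end

section
/- For all integers m and r with 0 ≤ r and 2r + 2 ≤ m, the power of two 2^{m−1−2r} divides the integer S(m,r) + (−1)^r. -/
/-!
Let `A(m, r) = ∑ᵢ C(m, 2i) C(i, r)`. Pascal's rule for `C(i, r)` gives `S(m, r+1) + S(m, r) =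
A(m, r+1)` and `S(m, 0) + 1 = A(m, 0)`, so `S(m, r) + (-1)^r` is an alternating sum of
`A(m, 0), …, A(m, r)` and it suffices that `2^(m-1-2r) ∣ A(m, r)`. Pascal's rule for `C(m, 2i)`,
routed through the companion sums `∑ᵢ C(m, 2i+1) C(i, r)`, yields the recurrence
`A(m+2, r+1) = 2 A(m+1, r+1) + A(m, r)` (and `A(m+2, 0) = 2 A(m+1, 0)`), which carries the
divisibility from the trivial cases `m ≤ 1` to all `m`.
-/

open Finset

def evenChooseSum (m r : ℕ) : ℕ := ∑ i ∈ range (m + 1), m.choose (2 * i) * i.choose r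

def oddChooseSum (m r : ℕ) : ℕ := ∑ i ∈ range (m + 1), m.choose (2 * i + 1) * i.choose r

theorem oddChooseSum_succ (m r : ℕ) :
    oddChooseSum (m + 1) r = oddChooseSum m r + evenChooseSum m r := by
  rw [oddChooseSum, sum_range_succ, Nat.choose_eq_zero_of_lt (by omega), zero_mul, add_zero,
    oddChooseSum, evenChooseSum, ← sum_add_distrib]
  refine sum_congr rfl fun i _ => ?_
  rw [Nat.choose_succ_succ, add_mul, add_comm]

theorem evenChooseSum_succ (m r : ℕ) :
    evenChooseSum (m + 1) r =
      evenChooseSum m r + ∑ i ∈ range (m + 1), m.choose (2 * i + 1) * (i + 1).choose r := by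
  have pascal (i : ℕ) :
      (m + 1).choose (2 * (i + 1)) = m.choose (2 * i + 1) + m.choose (2 * (i + 1)) :=
    Nat.choose_succ_succ m (2 * i + 1)
  have hshift : evenChooseSum m r =
      ∑ i ∈ range (m + 1), m.choose (2 * (i + 1)) * (i + 1).choose r
        + m.choose 0 * Nat.choose 0 r := by
    rw [evenChooseSum, ← sum_range_succ' (fun i => m.choose (2 * i) * i.choose r),
      sum_range_succ _ (m + 1), Nat.choose_eq_zero_of_lt (by omega : m < 2 * (m + 1)), zero_mul,
      add_zero]
  rw [evenChooseSum, sum_range_succ', hshift]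
  simp only [pascal, add_mul, sum_add_distrib, mul_zero, Nat.choose_zero_right, one_mul]
  ring

theorem evenChooseSum_succ_zero (m : ℕ) :
    evenChooseSum (m + 1) 0 = evenChooseSum m 0 + oddChooseSum m 0 := by
  simp only [evenChooseSum_succ, oddChooseSum, Nat.choose_zero_right]

theorem evenChooseSum_succ_succ (m r : ℕ) :
    evenChooseSum (m + 1) (r + 1) =
      evenChooseSum m (r + 1) + oddChooseSum m (r + 1) + oddChooseSum m r := by
  simp only [evenChooseSum_succ, oddChooseSum, Nat.choose_succ_succ, mul_add, sum_add_distrib]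
  ring

theorem evenChooseSum_add_two_zero (m : ℕ) :
    evenChooseSum (m + 2) 0 = 2 * evenChooseSum (m + 1) 0 := by
  rw [evenChooseSum_succ_zero, oddChooseSum_succ, evenChooseSum_succ_zero]
  ring

theorem evenChooseSum_add_two_succ (m r : ℕ) :
    evenChooseSum (m + 2) (r + 1) = 2 * evenChooseSum (m + 1) (r + 1) + evenChooseSum m r := by
  rw [evenChooseSum_succ_succ, oddChooseSum_succ, oddChooseSum_succ, evenChooseSum_succ_succ]
  ring

theorem two_pow_dvd_evenChooseSum (m r : ℕ) : 2 ^ (m - 1 - 2 * r) ∣ evenChooseSum m r := by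
  induction m using Nat.twoStepInduction generalizing r with
  | zero | one => simp
  | more m ih₀ ih₁ =>
    rcases r with _ | r
    · rw [evenChooseSum_add_two_zero]
      simpa [pow_succ'] using Nat.mul_dvd_mul_left 2 (ih₁ 0)
    · rw [evenChooseSum_add_two_succ]
      refine dvd_add ?_ ((pow_dvd_pow 2 (by omega)).trans (ih₀ r))
      refine (pow_dvd_pow 2 (by omega : _ ≤ m + 1 - 1 - 2 * (r + 1) + 1)).trans ?_
      rw [pow_succ']
      exact Nat.mul_dvd_mul_left 2 (ih₁ (r + 1))

theorem S_eq_sum_range (m r : ℕ) :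
    S m r = ∑ i ∈ range m, m.choose (2 * (i + 1)) * i.choose r := by
  have hsub : Icc (r + 1) (m / 2) ⊆ Ico 1 (m + 1) := fun i hi => by
    simp only [mem_Icc, mem_Ico] at hi ⊢; omega
  have hzero : ∀ i ∈ Ico 1 (m + 1), i ∉ Icc (r + 1) (m / 2) →
      m.choose (2 * i) * (i - 1).choose r = 0 := fun i hi hi' => by
    simp only [mem_Icc, mem_Ico, not_and_or, not_le] at hi hi'
    rcases hi' with hir | him
    · rw [Nat.choose_eq_zero_of_lt (by omega : i - 1 < r), mul_zero]
    · rw [Nat.choose_eq_zero_of_lt (by omega : m < 2 * i), zero_mul]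
  rw [S, sum_subset hsub hzero, sum_Ico_eq_sum_range, Nat.add_sub_cancel]
  simp only [add_comm 1, Nat.add_sub_cancel]

theorem S_zero_add_one (m : ℕ) : S m 0 + 1 = evenChooseSum m 0 := by
  simp only [S_eq_sum_range, evenChooseSum, sum_range_succ', Nat.choose_zero_right, mul_one,
    mul_zero]

theorem S_succ_add_S (m r : ℕ) : S m (r + 1) + S m r = evenChooseSum m (r + 1) := by
  simp only [S_eq_sum_range, evenChooseSum, sum_range_succ', Nat.choose_succ_succ, mul_add,
    sum_add_distrib, Nat.choose_zero_succ, mul_zero, add_zero]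
  ring

theorem two_pow_dvd_general (m r : ℕ) :
    (2 : ℤ) ^ (m - 1 - 2 * r) ∣ (S m r : ℤ) + (-1) ^ r := by
  induction r with
  | zero =>
    rw [pow_zero]
    exact_mod_cast S_zero_add_one m ▸ two_pow_dvd_evenChooseSum m 0
  | succ r ih =>
    have hsum : (2 : ℤ) ^ (m - 1 - 2 * (r + 1)) ∣ S m (r + 1) + S m r := by
      exact_mod_cast S_succ_add_S m r ▸ two_pow_dvd_evenChooseSum m (r + 1)
    have alternate : (S m (r + 1) : ℤ) + (-1) ^ (r + 1) =
        (S m (r + 1) + S m r) - (S m r + (-1) ^ r) := by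
      ring
    rw [alternate]
    exact dvd_sub hsum ((pow_dvd_pow 2 (by omega)).trans ih)

theorem two_pow_dvd (m r : ℕ) (h : 2 * r + 2 ≤ m) :
    (2 : ℤ) ^ (m - 1 - 2 * r) ∣ (S m r : ℤ) + (-1) ^ r :=
  two_pow_dvd_general m r
end

section
/- For all integers m and r with 0 ≤ r and 2r + 2 ≤ m, the sum S(m,r) is odd. -/
/-!
Shifting the index, `S n r = ∑ₖ C(n, 2k+2) C(k, r)`. Expanding
`C(n+2, 2k+2) = C(n, 2k) + 2 C(n, 2k+1) + C(n, 2k+2)` and then applying Pascal's rule to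
`C(k+1, r+1)` gives `S (n+2) (r+1) ≡ S n r` and `S (n+2) 0 ≡ 1 (mod 2)`. Hence
`S m r ≡ S (m - 2r) 0` is odd as soon as `m - 2r ≥ 2`.
-/

open Finset

theorem Nat.choose_add_two_add_two (n k : ℕ) :
    (n + 2).choose (k + 2) = n.choose k + 2 * n.choose (k + 1) + n.choose (k + 2) := by
  simp only [Nat.choose_succ_succ]
  ring

theorem S_eq_sum_range_s7 (r : ℕ) {n N : ℕ} (hN : n ≤ 2 * N) :
    S n r = ∑ k ∈ range N, n.choose (2 * k + 2) * k.choose r := by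
  rw [S, ← Ico_add_one_right_eq_Icc, ← sum_Ico_add']
  refine sum_subset (fun k hk ↦ ?_) fun k _ hk ↦ ?_
  · simp only [mem_Ico, mem_range] at hk ⊢
    omega
  · simp only [mem_Ico, not_and_or, not_le, not_lt] at hk
    rcases hk with hk | hk
    · simp [Nat.choose_eq_zero_of_lt hk]
    · rw [Nat.choose_eq_zero_of_lt (show n < 2 * (k + 1) by omega), zero_mul]

theorem S_add_two (n r : ℕ) :
    S (n + 2) r = ∑ k ∈ range (n + 2), n.choose (2 * k) * k.choose r
      + 2 * ∑ k ∈ range (n + 2), n.choose (2 * k + 1) * k.choose r + S n r := by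
  rw [S_eq_sum_range_s7 r (N := n + 2) (by omega), S_eq_sum_range_s7 r (N := n + 2) (by omega), mul_sum,
    ← sum_add_distrib, ← sum_add_distrib]
  refine sum_congr rfl fun k _ ↦ ?_
  rw [Nat.choose_add_two_add_two]
  ring

theorem sum_choose_two_mul_mul_choose_zero (n : ℕ) :
    ∑ k ∈ range (n + 2), n.choose (2 * k) * k.choose 0 = S n 0 + 1 := by
  rw [sum_range_succ', S_eq_sum_range_s7 0 (N := n + 1) (by omega)]
  simp [mul_add]

theorem sum_choose_two_mul_mul_choose_succ (n r : ℕ) :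
    ∑ k ∈ range (n + 2), n.choose (2 * k) * k.choose (r + 1) = S n r + S n (r + 1) := by
  rw [sum_range_succ', S_eq_sum_range_s7 r (N := n + 1) (by omega),
    S_eq_sum_range_s7 (r + 1) (N := n + 1) (by omega), ← sum_add_distrib]
  simp [Nat.choose_succ_succ, mul_add]

theorem odd_S_add_two_zero (n : ℕ) : Odd (S (n + 2) 0) := by
  rw [S_add_two, sum_choose_two_mul_mul_choose_zero]
  exact ⟨S n 0 + ∑ k ∈ range (n + 2), n.choose (2 * k + 1) * k.choose 0, by ring⟩

theorem odd_S_add_two_succ_iff (n r : ℕ) : Odd (S (n + 2) (r + 1)) ↔ Odd (S n r) := by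
  have h : S (n + 2) (r + 1) = S n r
      + 2 * (S n (r + 1) + ∑ k ∈ range (n + 2), n.choose (2 * k + 1) * k.choose (r + 1)) := by
    rw [S_add_two, sum_choose_two_mul_mul_choose_succ]
    ring
  rw [h, Nat.odd_add, iff_true_right (even_two_mul _)]

theorem S_odd (m r : ℕ) (h : 2 * r + 2 ≤ m) : Odd (S m r) := by
  induction r generalizing m with
  | zero =>
    obtain ⟨n, rfl⟩ := Nat.exists_eq_add_of_le' h
    exact odd_S_add_two_zero n
  | succ r ih =>
    obtain ⟨n, rfl⟩ : ∃ n, m = n + 2 := ⟨m - 2, by omega⟩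
    exact (odd_S_add_two_succ_iff n r).2 (ih n (by omega))
end

section
/- Let f(n) = T(2n, n). Then for every integer n ≥ 0, the recurrence (24n² + 44n + 16)·f(n) + (21n² + 37n + 14)·f(n+1) − (3n² + 7n + 2)·f(n+2) = 0 holds in the integers. -/
/-!
Pascal's rule telescopes the sum defining `T` in both arguments:
`T(n,r) + T(n,r+1) = ∑ₖ C(n,k) C(k,r+1) = C(n,r+1) 2^(n-r-1)` and
`T(n+1,r) = T(n,r) + C(n,r) 2^(n-r)`. Hence `g(n) = f(n+1) + f(n) = 2ⁿ (3n+1) C(2n,n) / (n+1)`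
is hypergeometric, `(n+2)(3n+1) g(n+1) = 4(2n+1)(3n+4) g(n)`, which is the recurrence.
-/

open Finset

/-- `f n = T (2n) n`. -/
def f (n : ℕ) : ℕ := T (2 * n) n

theorem Nat.sum_range_choose_mul_choose (n r : ℕ) :
    ∑ k ∈ range (n + 1), n.choose k * k.choose r = n.choose r * 2 ^ (n - r) := by
  rcases lt_or_ge n r with hnr | hrn
  · rw [Nat.choose_eq_zero_of_lt hnr, zero_mul]
    exact sum_eq_zero fun k hk ↦ by
      rw [Nat.choose_eq_zero_of_lt (show k < r by grind), mul_zero]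
  · have hsplit : n + 1 = r + (n - r + 1) := by omega
    rw [hsplit, sum_range_add, sum_eq_zero fun k hk ↦ by
      rw [Nat.choose_eq_zero_of_lt (mem_range.1 hk), mul_zero], zero_add,
      ← Nat.sum_range_choose, mul_sum]
    refine sum_congr rfl fun i _ ↦ ?_
    rw [Nat.choose_mul (by omega), Nat.add_sub_cancel_left]

theorem T_eq_sum_range (n r : ℕ) : T n r = ∑ j ∈ range n, n.choose (j + 1) * j.choose r := by
  have hshift : ∑ j ∈ range n, n.choose (j + 1) * j.choose r =
      ∑ j ∈ Ico 1 (n + 1), n.choose j * (j - 1).choose r := by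
    rw [sum_Ico_eq_sum_range, Nat.add_sub_cancel]
    exact sum_congr rfl fun j _ ↦ by rw [add_comm 1 j, Nat.add_sub_cancel]
  rw [hshift, T]
  refine sum_subset (fun j hj ↦ by grind) fun j hj hj' ↦ ?_
  rw [Nat.choose_eq_zero_of_lt (show j - 1 < r by grind), mul_zero]

theorem T_add_T_succ (n r : ℕ) : T n r + T n (r + 1) = n.choose (r + 1) * 2 ^ (n - (r + 1)) := by
  rw [T_eq_sum_range, T_eq_sum_range, ← sum_add_distrib, ← Nat.sum_range_choose_mul_choose,
    sum_range_succ' _ n, Nat.choose_zero_succ, mul_zero, add_zero]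
  exact sum_congr rfl fun j _ ↦ by rw [← mul_add, Nat.choose_succ_succ']

theorem T_succ_left (n r : ℕ) : T (n + 1) r = T n r + n.choose r * 2 ^ (n - r) := by
  calc T (n + 1) r
      = ∑ j ∈ range (n + 1), (n.choose (j + 1) * j.choose r + n.choose j * j.choose r) := by
        rw [T_eq_sum_range]
        exact sum_congr rfl fun j _ ↦ by rw [Nat.choose_succ_succ', add_mul, add_comm]
    _ = T n r + n.choose r * 2 ^ (n - r) := by
        rw [sum_add_distrib, sum_range_succ (fun j ↦ n.choose (j + 1) * j.choose r),
          Nat.choose_succ_self, zero_mul, add_zero, T_eq_sum_range, Nat.sum_range_choose_mul_choose]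

theorem f_succ_add_f (n : ℕ) :
    f (n + 1) + f n = 2 ^ n * ((2 * n).choose (n + 1) + (2 * n + 1).choose (n + 1)) := by
  have hT : f (n + 1) + f n = T (2 * n) n + T (2 * n) (n + 1)
      + (2 * n).choose (n + 1) * 2 ^ (2 * n - (n + 1)) + (2 * n + 1).choose (n + 1) * 2 ^ n := by
    rw [f, f, show 2 * (n + 1) = 2 * n + 1 + 1 by ring, T_succ_left, T_succ_left,
      show 2 * n + 1 - (n + 1) = n by omega]
    ring
  rw [hT, T_add_T_succ]
  rcases n with _ | m
  · simp
  · rw [show 2 * (m + 1) - (m + 1 + 1) = m by omega, pow_succ]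
    ring

theorem succ_mul_f_succ_add_f (n : ℕ) :
    (n + 1) * (f (n + 1) + f n) = 2 ^ n * (3 * n + 1) * n.centralBinom := by
  have h₁ : (2 * n).choose (n + 1) * (n + 1) = n * n.centralBinom := by
    rw [Nat.choose_succ_right_eq, Nat.centralBinom, show 2 * n - n = n by omega, mul_comm]
  have h₂ : (2 * n + 1).choose (n + 1) * (n + 1) = (2 * n + 1) * n.centralBinom := by
    rw [← Nat.add_one_mul_choose_eq, Nat.centralBinom, mul_comm]
  rw [f_succ_add_f]
  linear_combination 2 ^ n * (h₁ + h₂)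

theorem f_succ_add_f_hypergeometric (n : ℕ) :
    (n + 2) * (3 * n + 1) * (f (n + 2) + f (n + 1))
      = 4 * (2 * n + 1) * (3 * n + 4) * (f (n + 1) + f n) := by
  have h₀ := succ_mul_f_succ_add_f n
  have h₁ := succ_mul_f_succ_add_f (n + 1)
  have hc := Nat.succ_mul_centralBinom_succ n
  apply Nat.eq_of_mul_eq_mul_left n.succ_pos
  zify at h₀ h₁ hc ⊢
  linear_combination (3 * (n : ℤ) + 1) * (n + 1) * h₁
    + (3 * (n : ℤ) + 1) * 2 ^ (n + 1) * (3 * n + 4) * hc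
    - 4 * (2 * (n : ℤ) + 1) * (3 * n + 4) * h₀

theorem recurrence (n : ℕ) :
    (24 * (n : ℤ) ^ 2 + 44 * n + 16) * f n + (21 * (n : ℤ) ^ 2 + 37 * n + 14) * f (n + 1)
      - (3 * (n : ℤ) ^ 2 + 7 * n + 2) * f (n + 2) = 0 := by
  have h := f_succ_add_f_hypergeometric n
  zify at h
  linear_combination -h
end

section
/- For all integers m and r with 0 ≤ 2r < m, one has (m − r) · Σ_{i=r}^{⌊m/2⌋} C(m,2i)·C(i,r) = m · 2^{m−1−2r} · C(m−r, r) (the Moriarty formula, cleared of denominators). -/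
/-!
Split the sum by parity: put `E(m, r) = ∑ C(m, 2i) C(i, r)` and `O(m, r) = ∑ C(m, 2i+1) C(i, r)`.
Pascal's rule gives `O(m+1, r) = E(m, r) + O(m, r)`, and, after shifting the summation index in
`E(m+1, r+1)`, also `O(m+2, r+1) = 2 O(m+1, r+1) + O(m, r)`. At `m = n + 2r + 1` this is the
recurrence satisfied by `2^n C(n+r, r)`, so `O` has that closed form. Then
`E(m, r) = O(m+1, r) - O(m, r)`, and `(m - r) C(m-r-1, r) = (m - 2r) C(m-r, r)` turns this into
the formula.
-/

open Finset

namespace Moriarty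

def evenSum (m r : ℕ) : ℕ := ∑ i ∈ range (m + 1), m.choose (2 * i) * i.choose r

def oddSum (m r : ℕ) : ℕ := ∑ i ∈ range (m + 1), m.choose (2 * i + 1) * i.choose r

theorem oddSum_succ (m r : ℕ) : oddSum (m + 1) r = evenSum m r + oddSum m r := by
  rw [oddSum, eventually_constant_sum (N := m + 1) (fun i hi => by
      rw [Nat.choose_eq_zero_of_lt (by omega), zero_mul]) (Nat.le_succ _),
    evenSum, oddSum, ← sum_add_distrib]
  refine sum_congr rfl fun i _ => ?_
  rw [Nat.choose_succ_succ', add_mul]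

theorem evenSum_succ (m r : ℕ) :
    evenSum (m + 1) r =
      evenSum m r + ∑ i ∈ range (m + 1), m.choose (2 * i + 1) * (i + 1).choose r := by
  have hshift : evenSum m r =
      ∑ i ∈ range (m + 1), m.choose (2 * (i + 1)) * (i + 1).choose r + (0 : ℕ).choose r := by
    rw [evenSum, ← eventually_constant_sum (u := fun i => m.choose (2 * i) * i.choose r)
      (fun i hi => by rw [Nat.choose_eq_zero_of_lt (by omega), zero_mul]) (Nat.le_succ _),
      sum_range_succ']
    simp
  rw [evenSum, sum_range_succ', hshift, add_right_comm, ← sum_add_distrib]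
  refine congrArg₂ (· + ·) (sum_congr rfl fun i _ => ?_) (by simp)
  rw [mul_add, mul_one, Nat.choose_succ_succ', add_mul, add_comm]

theorem oddSum_succ_succ_zero (m : ℕ) : oddSum (m + 2) 0 = 2 * oddSum (m + 1) 0 := by
  have h : evenSum (m + 1) 0 = evenSum m 0 + oddSum m 0 := by
    simpa only [Nat.choose_zero_right, mul_one, oddSum] using evenSum_succ m 0
  rw [oddSum_succ, h, ← oddSum_succ, two_mul]

theorem oddSum_succ_succ (m r : ℕ) :
    oddSum (m + 2) (r + 1) = 2 * oddSum (m + 1) (r + 1) + oddSum m r := by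
  have h : evenSum (m + 1) (r + 1) = evenSum m (r + 1) + oddSum m r + oddSum m (r + 1) := by
    simpa only [Nat.choose_succ_succ', mul_add, sum_add_distrib, ← add_assoc, oddSum]
      using evenSum_succ m (r + 1)
  rw [oddSum_succ, h, oddSum_succ]
  ring

theorem oddSum_eq_zero {m r : ℕ} (h : m ≤ 2 * r) : oddSum m r = 0 := by
  refine sum_eq_zero fun i _ => ?_
  rcases lt_or_ge i r with hi | hi
  · rw [Nat.choose_eq_zero_of_lt hi, mul_zero]
  · rw [Nat.choose_eq_zero_of_lt (by omega), zero_mul]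

theorem oddSum_zero_right (n : ℕ) : oddSum (n + 1) 0 = 2 ^ n := by
  induction n with
  | zero => rfl
  | succ n ih => rw [oddSum_succ_succ_zero, ih, pow_succ, mul_comm]

theorem oddSum_eq (n r : ℕ) : oddSum (n + 2 * r + 1) r = 2 ^ n * (n + r).choose r := by
  induction r generalizing n with
  | zero => simpa using oddSum_zero_right n
  | succ r ihr =>
    induction n with
    | zero =>
      rw [show 0 + 2 * (r + 1) + 1 = 2 * r + 1 + 2 by ring, oddSum_succ_succ,
        oddSum_eq_zero (by omega), ← zero_add (2 * r), ihr]
      simp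
    | succ n ihn =>
      rw [show n + 1 + 2 * (r + 1) + 1 = (n + 2 * r + 2) + 2 by ring, oddSum_succ_succ,
        show n + 2 * r + 2 + 1 = n + 2 * (r + 1) + 1 by ring, ihn,
        show n + 2 * r + 2 = n + 1 + 2 * r + 1 by ring, ihr,
        show n + 1 + (r + 1) = (n + r + 1) + 1 by ring, Nat.choose_succ_succ']
      ring_nf

theorem mul_evenSum_eq (n r : ℕ) :
    (n + r + 1) * evenSum (n + 2 * r + 1) r = (n + 2 * r + 1) * 2 ^ n * (n + r + 1).choose r := by
  have hpascal := oddSum_succ (n + 2 * r + 1) r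
  rw [show n + 2 * r + 1 + 1 = n + 1 + 2 * r + 1 by ring, oddSum_eq, oddSum_eq] at hpascal
  have habsorb : (n + r + 1) * (n + r).choose r = (n + 1) * (n + r + 1).choose r := by
    rw [mul_comm, Nat.choose_mul_succ_eq, show n + r + 1 - r = n + 1 by omega, mul_comm]
  rw [show n + 1 + r = n + r + 1 by ring] at hpascal
  have key : (n + r + 1) * evenSum (n + 2 * r + 1) r + 2 ^ n * ((n + 1) * (n + r + 1).choose r) =
      (n + r + 1) * (2 ^ (n + 1) * (n + r + 1).choose r) := by
    rw [← habsorb, hpascal]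
    ring
  rw [pow_succ] at key
  linarith

theorem sum_Icc_eq_evenSum (m r : ℕ) :
    ∑ i ∈ Icc r (m / 2), m.choose (2 * i) * i.choose r = evenSum m r := by
  refine sum_subset (fun i hi => by rw [mem_Icc] at hi; rw [mem_range]; omega) fun i _ hi => ?_
  rw [mem_Icc, not_and_or, not_le, not_le] at hi
  rcases hi with hi | hi
  · rw [Nat.choose_eq_zero_of_lt hi, mul_zero]
  · rw [Nat.choose_eq_zero_of_lt (by omega), zero_mul]

end Moriarty

theorem moriarty (m r : ℕ) (h : 2 * r < m) :
    (m - r) * ∑ i ∈ Icc r (m / 2), m.choose (2 * i) * i.choose r =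
      m * 2 ^ (m - 1 - 2 * r) * (m - r).choose r := by
  obtain ⟨n, rfl⟩ : ∃ n, m = n + 2 * r + 1 := ⟨m - 2 * r - 1, by omega⟩
  rw [Moriarty.sum_Icc_eq_evenSum, show n + 2 * r + 1 - r = n + r + 1 by omega,
    show n + 2 * r + 1 - 1 - 2 * r = n by omega]
  exact Moriarty.mul_evenSum_eq n r
end

section
/- For all integers m and r with 0 ≤ r and 2r + 2 ≤ m, the cardinality of D⁺(m,r) equals S(m,r). -/
open Finset

/-- A tile: a white square, a black square, or a domino. -/
inductive Tile : Type
  | white : Tile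
  | black : Tile
  | domino : Tile
  deriving DecidableEq

/-- The number of cells covered by a tile. -/
def Tile.len : Tile → ℕ
  | .white => 1
  | .black => 1
  | .domino => 2

/-- `D m r`: domino arrangements covering a board of `m` cells, with exactly `r`
dominoes, whose first tile is a black square. -/
def D (m r : ℕ) : Set (List Tile) :=
  {l | (l.map Tile.len).sum = m ∧ l.count Tile.domino = r ∧ l.head? = some Tile.black}

/-- `D⁺ m r`: members of `D m r` containing a white square after the last domino. -/
def Dplus (m r : ℕ) : Set (List Tile) :=
  {l | l ∈ D m r ∧ ∃ a b : List Tile, l = a ++ Tile.white :: b ∧ Tile.domino ∉ b}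

/-!
Split off the last tile. A member of `D⁺(m+1,r)` is a member of `D(m,r)` followed by a white
square or a member of `D⁺(m,r)` followed by a black square, so
`|D⁺(m+1,r)| = |D⁺(m,r)| + |D(m,r)|`; in the same way `|D(n+2,r+1)| = 2|D(n+1,r+1)| + |D(n,r)|`.
On the other side, Pascal's rule for the bisected binomial sums `∑ᵢ C(n,2i+a) c(i)` gives
`S(m+1,r) = S(m,r) + B(m,r)` with `B(n,r) = ∑ᵢ C(n,2i+1) C(i,r)`, and shows that `B` obeys the
recurrence of `|D(n,r)|`.
-/

lemma List.head?_concat_eq_some_iff {α : Type*} {l : List α} {a b : α} :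
    (l ++ [a]).head? = some b ↔ l.head? = some b ∨ l = [] ∧ a = b := by
  cases l <;> simp

-- Cardinalities are computed as `encard`, which is additive without finiteness side conditions.
lemma Set.encard_eq_sum_encard_concat {α : Type*} [Fintype α] {s : Set (List α)}
    (hs : [] ∉ s) :
    s.encard = ∑ a, {l | l ++ [a] ∈ s}.encard := by
  have hunion : s = ⋃ a, (· ++ [a]) '' {l | l ++ [a] ∈ s} := by
    ext l
    rcases l.eq_nil_or_concat with rfl | ⟨l, a, rfl⟩
    · simp [hs]
    · simp
  have hdisj :
      Pairwise (Function.onFun Disjoint fun a : α => (· ++ [a]) '' {l | l ++ [a] ∈ s}) := by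
    intro a b hab
    refine Set.disjoint_left.mpr ?_
    rintro _ ⟨l, -, rfl⟩ ⟨l', -, h⟩
    exact hab (List.singleton_inj.mp (List.append_inj' h rfl).2.symm)
  conv_lhs => rw [hunion]
  rw [Set.encard_iUnion_of_finite hdisj, finsum_eq_sum_of_fintype]
  exact Finset.sum_congr rfl fun a _ => (List.append_left_injective [a]).encard_image _

instance : Fintype Tile :=
  ⟨{.white, .black, .domino}, fun t => by cases t <;> simp⟩

lemma Tile.sum_univ {M : Type*} [AddCommMonoid M] (f : Tile → M) :
    ∑ t, f t = f .white + f .black + f .domino := by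
  simp [Finset.univ, Fintype.elems, add_assoc]

lemma Tile.sum_len_eq_zero_iff {l : List Tile} : (l.map Tile.len).sum = 0 ↔ l = [] := by
  cases l with
  | nil => simp
  | cons t l => cases t <;> simp [Tile.len]

lemma nil_notMem_D (n r : ℕ) : [] ∉ D n r := by simp [D]

lemma D_zero (r : ℕ) : D 0 r = ∅ := by
  ext l
  simp only [D, Set.mem_ofPred_eq, Tile.sum_len_eq_zero_iff, Set.mem_empty_iff_false, iff_false]
  rintro ⟨rfl, -, h⟩
  simp at h

lemma mem_D_one {l : List Tile} {r : ℕ} : l ∈ D 1 r ↔ l = [.black] ∧ r = 0 := by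
  constructor
  · rintro ⟨hsum, hcount, hhead⟩
    obtain ⟨l, rfl⟩ := List.head?_eq_some_iff.mp hhead
    simp_all [Tile.len, Tile.sum_len_eq_zero_iff]
  · rintro ⟨rfl, rfl⟩
    exact ⟨rfl, rfl, rfl⟩

lemma concat_white_mem_D_iff {l : List Tile} {n r : ℕ} :
    l ++ [.white] ∈ D (n + 1) r ↔ l ∈ D n r := by
  simp [D, List.head?_concat_eq_some_iff, Tile.len, -List.head?_append]

lemma concat_black_mem_D_iff {l : List Tile} {n r : ℕ} :
    l ++ [.black] ∈ D (n + 1) r ↔ l ∈ D n r ∨ l = [] ∧ n = 0 ∧ r = 0 := by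
  rcases eq_or_ne l [] with rfl | hl
  · simp [D, Tile.len, eq_comm]
  · simp [D, List.head?_concat_eq_some_iff, Tile.len, -List.head?_append, hl]

lemma concat_domino_mem_D_iff {l : List Tile} {n r : ℕ} :
    l ++ [.domino] ∈ D (n + 2) (r + 1) ↔ l ∈ D n r := by
  simp [D, List.head?_concat_eq_some_iff, Tile.len, -List.head?_append]

lemma concat_domino_notMem_D_zero (l : List Tile) (n : ℕ) : l ++ [.domino] ∉ D n 0 := by
  simp [D]

lemma encard_D_add_two (n r : ℕ) :
    (D (n + 2) r).encard =
      2 * (D (n + 1) r).encard + {l | l ++ [.domino] ∈ D (n + 2) r}.encard := by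
  rw [Set.encard_eq_sum_encard_concat (nil_notMem_D _ _), Tile.sum_univ]
  simp only [concat_white_mem_D_iff, concat_black_mem_D_iff, Nat.add_eq_zero_iff, one_ne_zero,
    and_false, false_and, or_false, Set.ofPred_mem_eq]
  ring

lemma exists_white_suffix_concat_iff {l : List Tile} {t : Tile} :
    (∃ a b, l ++ [t] = a ++ .white :: b ∧ .domino ∉ b) ↔
      t = .white ∨ t ≠ .domino ∧ ∃ a b, l = a ++ .white :: b ∧ .domino ∉ b := by
  constructor
  · rintro ⟨a, b, h, hb⟩
    rcases b.eq_nil_or_concat with rfl | ⟨b, u, rfl⟩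
    · exact .inl (List.singleton_inj.mp (List.append_inj' h rfl).2)
    · rw [List.concat_eq_append, ← List.cons_append, ← List.append_assoc] at h
      obtain ⟨rfl, hu⟩ := List.append_inj' h rfl
      obtain rfl := List.singleton_inj.mp hu
      simp only [List.concat_eq_append, List.mem_append, List.mem_singleton, not_or] at hb
      exact .inr ⟨Ne.symm hb.2, a, b, rfl, hb.1⟩
  · rintro (rfl | ⟨ht, a, b, rfl, hb⟩)
    · exact ⟨l, [], rfl, List.not_mem_nil⟩
    · exact ⟨a, b ++ [t], by simp, by simp [hb, Ne.symm ht]⟩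

lemma encard_Dplus_succ (n r : ℕ) :
    (Dplus (n + 1) r).encard = (D n r).encard + (Dplus n r).encard := by
  have hwhite : {l | l ++ [.white] ∈ Dplus (n + 1) r} = D n r := by
    ext l
    simp [Dplus, exists_white_suffix_concat_iff, concat_white_mem_D_iff]
  have hblack : {l | l ++ [.black] ∈ Dplus (n + 1) r} = Dplus n r := by
    ext l
    simp only [Dplus, Set.mem_ofPred_eq, concat_black_mem_D_iff, exists_white_suffix_concat_iff,
      reduceCtorEq, ne_eq, not_false_eq_true, true_and, false_or]
    exact and_congr_left fun ⟨a, b, hl, _⟩ => or_iff_left (by rintro ⟨rfl, -⟩; simp at hl)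
  have hdomino : {l | l ++ [.domino] ∈ Dplus (n + 1) r} = ∅ := by
    ext l
    simp [Dplus, exists_white_suffix_concat_iff]
  rw [Set.encard_eq_sum_encard_concat (fun h => nil_notMem_D _ _ h.1), Tile.sum_univ, hwhite,
    hblack, hdomino, Set.encard_empty, add_zero]

def bisectSum (n a : ℕ) (c : ℕ → ℕ) : ℕ := ∑ i ∈ range (n + 1), n.choose (2 * i + a) * c i

lemma bisectSum_one_one (c : ℕ → ℕ) : bisectSum 1 1 c = c 0 := by
  simp [bisectSum, sum_range_succ, Nat.choose_eq_zero_of_lt (show 1 < 3 by norm_num)]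

lemma bisectSum_succ_succ (n a : ℕ) (c : ℕ → ℕ) :
    bisectSum (n + 1) (a + 1) c = bisectSum n a c + bisectSum n (a + 1) c := by
  rw [bisectSum, sum_range_succ, Nat.choose_eq_zero_of_lt (by omega), zero_mul, add_zero]
  simp only [bisectSum, ← add_assoc, Nat.choose_succ_succ', add_mul, sum_add_distrib]

lemma bisectSum_offset_zero (n : ℕ) (c : ℕ → ℕ) :
    bisectSum n 0 c = c 0 + bisectSum n 2 (fun i => c (i + 1)) := by
  rw [bisectSum, sum_range_succ', bisectSum, sum_range_succ,
    Nat.choose_eq_zero_of_lt (show n < 2 * n + 2 by omega), zero_mul, add_zero]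
  simp [mul_add, add_comm]

lemma bisectSum_add_distrib (n a : ℕ) (c d : ℕ → ℕ) :
    bisectSum n a (fun i => c i + d i) = bisectSum n a c + bisectSum n a d := by
  simp only [bisectSum, mul_add, sum_add_distrib]

lemma bisectSum_one_two_step (n : ℕ) (c : ℕ → ℕ) :
    bisectSum (n + 2) 1 c + bisectSum n 1 c =
      2 * bisectSum (n + 1) 1 c + bisectSum n 1 (fun i => c (i + 1)) := by
  have h₁ : bisectSum (n + 2) 1 c = bisectSum (n + 1) 0 c + bisectSum (n + 1) 1 c :=
    bisectSum_succ_succ (n + 1) 0 c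
  have h₂ := bisectSum_offset_zero (n + 1) c
  have h₃ : bisectSum (n + 1) 2 (fun i => c (i + 1)) =
      bisectSum n 1 (fun i => c (i + 1)) + bisectSum n 2 (fun i => c (i + 1)) :=
    bisectSum_succ_succ n 1 _
  have h₄ := bisectSum_offset_zero n c
  have h₅ : bisectSum (n + 1) 1 c = bisectSum n 0 c + bisectSum n 1 c :=
    bisectSum_succ_succ n 0 c
  omega

lemma bisectSum_one_choose_zero (n : ℕ) :
    bisectSum (n + 2) 1 (·.choose 0) = 2 * bisectSum (n + 1) 1 (·.choose 0) := by
  have := bisectSum_one_two_step n (·.choose 0)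
  simp only [Nat.choose_zero_right] at this ⊢
  omega

lemma bisectSum_one_choose_succ (n r : ℕ) :
    bisectSum (n + 2) 1 (·.choose (r + 1)) =
      2 * bisectSum (n + 1) 1 (·.choose (r + 1)) + bisectSum n 1 (·.choose r) := by
  have := bisectSum_one_two_step n (·.choose (r + 1))
  simp only [Nat.choose_succ_succ', bisectSum_add_distrib] at this
  omega

lemma S_eq_bisectSum (m r : ℕ) : S m r = bisectSum m 2 (·.choose r) := by
  rw [S, ← Finset.Ico_add_one_right_eq_Icc, ← Finset.sum_Ico_add', bisectSum]
  simp only [Nat.add_sub_cancel, mul_add, mul_one]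
  refine sum_subset (fun i hi => ?_) fun i _ hi => ?_
  · simp only [mem_Ico, mem_range] at hi ⊢
    omega
  · rcases lt_or_ge i r with hir | hir
    · rw [Nat.choose_eq_zero_of_lt hir, mul_zero]
    · rw [Nat.choose_eq_zero_of_lt (show m < 2 * i + 2 by simp at hi; omega), zero_mul]

lemma S_succ (m r : ℕ) : S (m + 1) r = S m r + bisectSum m 1 (·.choose r) := by
  rw [S_eq_bisectSum, S_eq_bisectSum, bisectSum_succ_succ, add_comm]

lemma encard_D (n r : ℕ) : (D n r).encard = bisectSum n 1 (·.choose r) := by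
  induction n using Nat.twoStepInduction generalizing r with
  | zero => simp [D_zero, bisectSum]
  | one =>
    rw [bisectSum_one_one]
    cases r with
    | zero =>
      rw [show D 1 0 = {[.black]} from Set.ext fun _ => by simp [mem_D_one], Set.encard_singleton]
      rfl
    | succ r =>
      rw [show D 1 (r + 1) = ∅ from Set.ext fun _ => by simp [mem_D_one], Set.encard_empty,
        Nat.choose_zero_succ, Nat.cast_zero]
  | more n ih₀ ih₁ =>
    cases r with
    | zero =>
      have hdomino : {l | l ++ [.domino] ∈ D (n + 2) 0} = ∅ :=
        Set.eq_empty_of_forall_notMem fun l => concat_domino_notMem_D_zero l _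
      rw [encard_D_add_two, hdomino, ih₁, bisectSum_one_choose_zero]
      simp
    | succ r =>
      have hdomino : {l | l ++ [.domino] ∈ D (n + 2) (r + 1)} = D n r :=
        Set.ext fun _ => concat_domino_mem_D_iff
      rw [encard_D_add_two, hdomino, ih₁, ih₀, bisectSum_one_choose_succ]
      norm_cast

lemma encard_Dplus (m r : ℕ) : (Dplus m r).encard = S m r := by
  induction m with
  | zero => simp [Dplus, D_zero, S]
  | succ m ih => rw [encard_Dplus_succ, ih, encard_D, S_succ, add_comm, Nat.cast_add]

theorem card_Dplus_general (m r : ℕ) : (Dplus m r).ncard = S m r := by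
  rw [Set.ncard_def, encard_Dplus, ENat.toNat_natCast]

theorem card_Dplus (m r : ℕ) (h : 2 * r + 2 ≤ m) : (Dplus m r).ncard = S m r :=
  card_Dplus_general m r
end

section
/- For all integers n and r with 1 ≤ r ≤ n−1, the cardinality of B⁺(n,r) equals V(n,r). -/
open Finset

/-- A letter for arrangements: white, black, or decorated. -/
inductive Letter : Type
  | white : Letter
  | black : Letter
  | decorated : Letter
  deriving DecidableEq

/-- `B n r`: words of length `n` over `Letter` with exactly `r` black letters
whose last letter is not black. -/
def B (n r : ℕ) : Set (List Letter) :=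
  {w | w.length = n ∧ w.count Letter.black = r ∧ w.getLast? ≠ some Letter.black}

/-- `B⁺ n r`: members of `B n r` containing a decorated letter strictly to the
right of the last black letter. -/
def Bplus (n r : ℕ) : Set (List Letter) :=
  {w | w ∈ B n r ∧ ∃ a b : List Letter, w = a ++ Letter.decorated :: b ∧ Letter.black ∉ b}

/-!
Cutting a word of `B⁺(n,r)` just after its last black letter splits it uniquely into a prefix `p`
of length `n - 1 - j` with `r - 1` black letters and a black-free tail `s` of length `j ≥ 1`
containing a decorated letter, and every such pair glues back to a word of `B⁺(n,r)`. There are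
`C(n-1-j, r-1) · 2^(n-r-j)` choices for `p` and `2^j - 1` for `s`: these are the summands of `V n r`.
-/

namespace List

variable {α : Type*}

theorem exists_eq_append_cons_notMem_of_mem {x : α} {l : List α} (h : x ∈ l) :
    ∃ p s, l = p ++ x :: s ∧ x ∉ s := by
  induction l using List.reverseRecOn with
  | nil => simp at h
  | append_singleton l y ih =>
    by_cases hy : y = x
    · exact ⟨l, [], by simp [hy], not_mem_nil⟩
    · obtain ⟨p, s, rfl, hs⟩ := ih (by simpa [Ne.symm hy] using h)
      exact ⟨p, s ++ [y], by simp, by simp [hs, Ne.symm hy]⟩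

theorem append_cons_inj_of_notMem_right {p s p' s' : List α} {x : α} (hs : x ∉ s)
    (hs' : x ∉ s') (h : p ++ x :: s = p' ++ x :: s') : p = p' ∧ s = s' := by
  rcases append_eq_append_iff.1 h with ⟨a, rfl, ha⟩ | ⟨b, rfl, hb⟩
  · cases a with
    | nil => simp_all
    | cons y a => simp only [cons_append, cons.injEq] at ha; exact absurd (ha.2 ▸ by simp) hs
  · cases b with
    | nil => simp_all
    | cons y b => simp only [cons_append, cons.injEq] at hb; exact absurd (hb.2 ▸ by simp) hs'

theorem getLast?_append_cons_ne {a b : List α} {x y : α} (hyx : y ≠ x) (hb : x ∉ b) :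
    (a ++ y :: b).getLast? ≠ some x := by
  rw [getLast?_append_cons]
  intro h
  rcases mem_cons.1 (mem_of_getLast? h) with h | h
  exacts [hyx h.symm, hb h]

end List

section Words

variable (α : Type*) [Fintype α] [DecidableEq α]

def words : ℕ → Finset (List α)
  | 0 => {[]}
  | m + 1 => (univ ×ˢ words m).image fun p => p.1 :: p.2

variable {α}

theorem mem_words {m : ℕ} {l : List α} : l ∈ words α m ↔ l.length = m := by
  induction m generalizing l with
  | zero => simp [words]
  | succ m ih => cases l <;> simp [words, ih]

theorem card_filter_words_succ (P : List α → Prop) [DecidablePred P] (m : ℕ) :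
    #{l ∈ words α (m + 1) | P l} = ∑ a, #{l ∈ words α m | P (a :: l)} := by
  rw [words, filter_image, card_image_of_injective _ (fun p q h => by simpa [Prod.ext_iff] using h)]
  simp only [card_filter, sum_product]

theorem card_words_filter_forall_mem (S : Finset α) (m : ℕ) :
    #{l ∈ words α m | ∀ a ∈ l, a ∈ S} = #S ^ m := by
  induction m with
  | zero => simp [words, filter_singleton]
  | succ m ih =>
    calc #{l ∈ words α (m + 1) | ∀ a ∈ l, a ∈ S}
        = ∑ a, if a ∈ S then #S ^ m else 0 := by
          rw [card_filter_words_succ]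
          refine sum_congr rfl fun a _ => ?_
          split_ifs with ha <;> simp [ha, ih]
      _ = #S ^ (m + 1) := by rw [sum_ite_mem, univ_inter, sum_const, smul_eq_mul, pow_succ']

theorem card_words_filter_count_eq (x : α) (m k : ℕ) :
    #{l ∈ words α m | l.count x = k} = m.choose k * (Fintype.card α - 1) ^ (m - k) := by
  induction m generalizing k with
  | zero => cases k <;> simp [words, filter_singleton]
  | succ m ih =>
    rw [card_filter_words_succ, Fintype.sum_eq_add_sum_compl x]
    have hother : ∀ a ∈ ({x}ᶜ : Finset α), #{l ∈ words α m | (a :: l).count x = k} =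
        m.choose k * (Fintype.card α - 1) ^ (m - k) := fun a ha => by
      rw [← ih]; simp_all
    rw [sum_congr rfl hother, sum_const, card_compl, card_singleton, smul_eq_mul]
    cases k with
    | zero => simp [pow_succ']
    | succ k =>
      simp only [List.count_cons_self, Nat.add_right_cancel_iff, ih, Nat.choose_succ_succ']
      rcases lt_or_ge k m with hkm | hmk
      · rw [Nat.succ_sub_succ, show m - k = m - (k + 1) + 1 by omega, pow_succ]
        ring
      · simp [Nat.choose_eq_zero_of_lt (Nat.lt_succ_of_le hmk)]

theorem card_words_filter_notMem_and_mem {x y : α} (hxy : x ≠ y) (m : ℕ) :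
    #{l ∈ words α m | x ∉ l ∧ y ∈ l} =
      (Fintype.card α - 1) ^ m - (Fintype.card α - 2) ^ m := by
  have hsplit : ({l ∈ words α m | x ∉ l ∧ y ∈ l} : Finset (List α)) =
      {l ∈ words α m | ∀ a ∈ l, a ∈ ({x}ᶜ : Finset α)} \
        {l ∈ words α m | ∀ a ∈ l, a ∈ ({x, y}ᶜ : Finset α)} := by
    ext l
    simp only [mem_filter, mem_sdiff, mem_compl, mem_singleton, mem_insert, not_or]
    grind
  have hsub : {l ∈ words α m | ∀ a ∈ l, a ∈ ({x, y}ᶜ : Finset α)} ⊆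
      {l ∈ words α m | ∀ a ∈ l, a ∈ ({x}ᶜ : Finset α)} := by
    intro l
    simp +contextual [mem_filter]
  rw [hsplit, card_sdiff_of_subset hsub, card_words_filter_forall_mem,
    card_words_filter_forall_mem, card_compl, card_compl, card_singleton, card_pair hxy]

end Words

open Letter

instance : Fintype Letter :=
  ⟨{white, black, decorated}, fun x => by cases x <;> simp⟩

theorem card_letter : Fintype.card Letter = 3 := rfl

theorem mem_Bplus_iff {n r : ℕ} (hr : 1 ≤ r) {w : List Letter} :
    w ∈ Bplus n r ↔ ∃ p s, p ++ black :: s = w ∧ black ∉ s ∧ decorated ∈ s ∧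
      p.length + s.length + 1 = n ∧ p.count black + 1 = r := by
  constructor
  · rintro ⟨⟨rfl, rfl, -⟩, a, b, rfl, hb⟩
    have ha : black ∈ a := by simpa [hb] using List.count_pos_iff.1 hr
    obtain ⟨p, s, rfl, hs⟩ := List.exists_eq_append_cons_notMem_of_mem ha
    refine ⟨p, s ++ decorated :: b, by simp, by simp [hs, hb], by simp, by simp; omega, ?_⟩
    simp [List.count_append, List.count_eq_zero.2 hs, List.count_eq_zero.2 hb]
  · rintro ⟨p, s, rfl, hs, hds, rfl, rfl⟩
    obtain ⟨u, v, rfl⟩ := List.append_of_mem hds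
    have hv : black ∉ v := fun h => hs (by simp [h])
    refine ⟨⟨by simp; omega, ?_, ?_⟩, p ++ black :: u, v, by simp, hv⟩
    · simp [List.count_append, List.count_eq_zero.2 hs]
    · simpa using List.getLast?_append_cons_ne (a := p ++ black :: u) (by decide) hv

def lastBlackSplits (n r : ℕ) : Finset (Σ _ : ℕ, List Letter × List Letter) :=
  (Icc 1 (n - r)).sigma fun j =>
    {p ∈ words Letter (n - 1 - j) | p.count black = r - 1} ×ˢ
      {s ∈ words Letter j | black ∉ s ∧ decorated ∈ s}

def joinAtBlack (x : Σ _ : ℕ, List Letter × List Letter) : List Letter :=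
  x.2.1 ++ black :: x.2.2

theorem Bplus_eq_image_joinAtBlack {n r : ℕ} (hr : 1 ≤ r) :
    Bplus n r = ((lastBlackSplits n r).image joinAtBlack : Set (List Letter)) := by
  ext w
  simp only [mem_Bplus_iff hr, lastBlackSplits, joinAtBlack, coe_image, Set.mem_image, mem_coe,
    mem_sigma, mem_Icc, mem_product, mem_filter, mem_words, Sigma.exists, Prod.exists]
  constructor
  · rintro ⟨p, s, rfl, hs, hds, hlen, hcount⟩
    have hsne : s ≠ [] := List.ne_nil_of_mem hds
    have := List.count_le_length (a := black) (l := p)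
    have := List.length_pos_iff.2 hsne
    exact ⟨s.length, p, s, ⟨⟨by omega, by omega⟩, ⟨by omega, by omega⟩, rfl, hs, hds⟩, rfl⟩
  · rintro ⟨j, p, s, ⟨hj, ⟨hp, hcount⟩, rfl, hs, hds⟩, rfl⟩
    exact ⟨p, s, rfl, hs, hds, by omega, by omega⟩

theorem injOn_joinAtBlack (n r : ℕ) : Set.InjOn joinAtBlack (lastBlackSplits n r) := by
  rintro ⟨j, p, s⟩ hx ⟨j', p', s'⟩ hx' h
  simp only [lastBlackSplits, coe_sigma, Set.mem_sigma_iff, mem_coe, mem_product, mem_filter,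
    mem_words] at hx hx'
  obtain ⟨-, -, rfl, hs, -⟩ := hx
  obtain ⟨-, -, rfl, hs', -⟩ := hx'
  obtain ⟨rfl, rfl⟩ := List.append_cons_inj_of_notMem_right hs hs' h
  rfl

theorem card_lastBlackSplits {n r : ℕ} (hr : 1 ≤ r) : #(lastBlackSplits n r) = V n r := by
  rw [lastBlackSplits, card_sigma, V]
  refine sum_congr rfl fun j _ => ?_
  rw [card_product, card_words_filter_count_eq, card_words_filter_notMem_and_mem (by decide),
    card_letter, show n - 1 - j - (r - 1) = n - r - j by omega]
  norm_num

theorem card_Bplus_eq_V_general (n r : ℕ) (h1 : 1 ≤ r) :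
    (Bplus n r).ncard = V n r := by
  rw [Bplus_eq_image_joinAtBlack h1, Set.ncard_coe_finset,
    card_image_of_injOn (injOn_joinAtBlack n r), card_lastBlackSplits h1]

theorem card_Bplus_eq_V (n r : ℕ) (h1 : 1 ≤ r) (h2 : r + 1 ≤ n) :
    (Bplus n r).ncard = V n r :=
  card_Bplus_eq_V_general n r h1
end

section
/- For all integers m and r with 0 ≤ r and 2r + 2 ≤ m, the cardinality of D⁺(m,r) equals the cardinality of B⁺(m−1−r, r); that is, there is a bijection between these two finite sets. -/
def tl : Tile → Letter
  | .white => .decorated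
  | .black => .white
  | .domino => .black

def lt : Letter → Tile
  | .decorated => .white
  | .white => .black
  | .black => .domino

lemma lt_tl (t : Tile) : lt (tl t) = t := by cases t <;> rfl
lemma tl_lt (x : Letter) : tl (lt x) = x := by cases x <;> rfl
lemma tl_inj : Function.Injective tl := Function.LeftInverse.injective lt_tl
lemma lt_inj : Function.Injective lt := Function.LeftInverse.injective tl_lt

lemma sum_len (l : List Tile) :
    (l.map Tile.len).sum = l.length + l.count Tile.domino := by
  induction l with
  | nil => rfl
  | cons t l ih => cases t <;> simp [Tile.len, ih, List.count_cons] <;> omega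

lemma mem_of_getLast?' {α : Type*} {l : List α} {x : α} (h : l.getLast? = some x) : x ∈ l := by
  obtain ⟨hne, rfl⟩ := List.mem_getLast?_eq_getLast (show x ∈ l.getLast? by rw [h]; rfl)
  exact List.getLast_mem hne

lemma count_map_tl (t : List Tile) :
    (t.map tl).count Letter.black = t.count Tile.domino :=
  List.count_map_of_injective t tl tl_inj Tile.domino

lemma count_map_lt (w : List Letter) :
    (w.map lt).count Tile.domino = w.count Letter.black :=
  List.count_map_of_injective w lt lt_inj Letter.black

theorem card_Dplus_eq_card_Bplus (m r : ℕ) (h : 2 * r + 2 ≤ m) :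
    (Dplus m r).ncard = (Bplus (m - 1 - r) r).ncard := by
  have key : Bplus (m - 1 - r) r = (fun l : List Tile => l.tail.map tl) '' Dplus m r := by
    ext w
    constructor
    · rintro ⟨⟨hlen, hcount, hlast⟩, a, b, hw, hb⟩
      refine ⟨Tile.black :: w.map lt, ⟨⟨?_, ?_, rfl⟩, ?_⟩, ?_⟩
      · rw [sum_len]
        simp only [List.length_cons, List.length_map, List.count_cons]
        rw [count_map_lt, hcount, hlen]
        rw [if_neg (by simp)]
        omega
      · rw [List.count_cons_of_ne (by simp), count_map_lt, hcount]
      · refine ⟨Tile.black :: a.map lt, b.map lt, ?_, ?_⟩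
        · rw [hw]; simp [lt]
        · intro hmem
          obtain ⟨x, hx, hfx⟩ := List.mem_map.mp hmem
          cases x <;> simp [lt] at hfx
          exact hb hx
      · simp only [List.tail_cons, List.map_map]
        simp [Function.comp_def, tl_lt]
    · rintro ⟨l, ⟨⟨hsum, hcount, hhead⟩, a, b, hl, hb⟩, rfl⟩
      obtain ⟨t, rfl⟩ : ∃ t, l = Tile.black :: t := by
        cases l with
        | nil => simp at hhead
        | cons x t => simp at hhead; exact ⟨t, by rw [hhead]⟩
      rw [sum_len, List.count_cons_of_ne (by simp)] at hsum
      rw [List.count_cons_of_ne (by simp)] at hcount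
      simp only [List.length_cons] at hsum
      simp only [List.tail_cons]
      obtain ⟨a', rfl⟩ : ∃ a', a = Tile.black :: a' := by
        cases a with
        | nil => simp at hl
        | cons c a' =>
          simp only [List.cons_append, List.cons.injEq] at hl
          exact ⟨a', by rw [hl.1]⟩
      simp only [List.cons_append, List.cons.injEq, true_and] at hl
      subst hl
      refine ⟨⟨?_, ?_, ?_⟩, ?_⟩
      · simp only [List.length_map]
        omega
      · rw [count_map_tl]; omega
      · rw [List.map_append]
        simp only [List.map_cons, show tl Tile.white = Letter.decorated from rfl]
        rw [List.getLast?_append_cons]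
        intro hlast
        have := mem_of_getLast?' hlast
        rcases List.mem_cons.mp this with h1 | h2
        · exact absurd h1 (by simp)
        · obtain ⟨x, hx, hfx⟩ := List.mem_map.mp h2
          cases x <;> simp [tl] at hfx
          exact hb hx
      · refine ⟨a'.map tl, b.map tl, by simp [tl], ?_⟩
        intro hmem
        obtain ⟨x, hx, hfx⟩ := List.mem_map.mp hmem
        cases x <;> simp [tl] at hfx
        exact hb hx
  rw [key, Set.ncard_image_of_injOn]
  rintro l1 ⟨⟨-, -, h1⟩, -⟩ l2 ⟨⟨-, -, h2⟩, -⟩ heq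
  obtain ⟨t1, rfl⟩ : ∃ t, l1 = Tile.black :: t := by
    cases l1 with
    | nil => simp at h1
    | cons x t => simp at h1; exact ⟨t, by rw [h1]⟩
  obtain ⟨t2, rfl⟩ : ∃ t, l2 = Tile.black :: t := by
    cases l2 with
    | nil => simp at h2
    | cons x t => simp at h2; exact ⟨t, by rw [h2]⟩
  simp only [List.tail_cons] at heq
  rw [List.map_injective_iff.mpr tl_inj heq]
end

section
/- For all integers n and r with 0 ≤ r ≤ n−1, the number of arrangements in B⁺(n,r) of odd weight equals the number of arrangements in B⁻(n,r) of even weight plus (−1)^{r+1}; that is, |B⁺(n,r) ∩ {odd weight}| = |B⁻(n,r) ∩ {even weight}| + (−1)^{r+1} as integers. -/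
open Finset

/-- The weight of an arrangement: the length of the maximal run of black letters
immediately preceding the last position. -/
def weight (w : List Letter) : ℕ :=
  (w.dropLast.reverse.takeWhile (· = Letter.black)).length

/-- `B⁻ n r`: members of `B n r` not in `B⁺ n r`. -/
def Bminus (n r : ℕ) : Set (List Letter) := B n r \ Bplus n r

/-!
Split `B n r` into classes according to membership in `B⁺` and the parity of the weight. Deleting
the first letter changes neither of these as long as `1 ≤ r` and `r + 2 ≤ n`, so every class
satisfies `c (n + 1) (r + 1) = c n r + 2 c n (r + 1)` (first letter black, resp. white or
decorated). Hence so does the difference of the two classes in the theorem, and `(-1) ^ (r + 1)`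
solves this recursion. The boundary values are explicit: for `r = 0` only the all-white word counts,
and for `r = n - 1` the only words are `black ^ (n - 1)` followed by a white or decorated letter.
-/

instance inst_s16 : Fintype Letter :=
  ⟨{Letter.white, Letter.black, Letter.decorated}, by intro x; cases x <;> simp⟩

theorem List.ncard_eq_sum_ncard_preimage_cons {α : Type*} [Fintype α] {S : Set (List α)}
    (hS : S.Finite) (hnil : [] ∉ S) :
    S.ncard = ∑ y, (List.cons y ⁻¹' S).ncard := by
  have hcover : S = ⋃ y, List.cons y '' (List.cons y ⁻¹' S) := by
    ext w
    cases w <;> simp [hnil]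
  conv_lhs => rw [hcover]
  rw [Set.ncard_iUnion_of_finite, finsum_eq_sum_of_fintype]
  · simp only [Set.ncard_image_of_injective _ List.cons_injective]
  · exact fun y => hS.subset (Set.image_preimage_subset _ _)
  · intro y z hyz
    rw [Function.onFun, Set.disjoint_left]
    rintro _ ⟨u, -, rfl⟩ ⟨v, -, h⟩
    exact hyz (List.cons_eq_cons.mp h).1.symm

def DecoratedAfterLastBlack (w : List Letter) : Prop :=
  ∃ a b : List Letter, w = a ++ Letter.decorated :: b ∧ Letter.black ∉ b

theorem mem_Bplus_iff_s16 {n r : ℕ} {w : List Letter} :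
    w ∈ Bplus n r ↔ w ∈ B n r ∧ DecoratedAfterLastBlack w :=
  Iff.rfl

section DecoratedAfterLastBlack

variable {w : List Letter}

theorem decoratedAfterLastBlack_cons {y : Letter} (h : Letter.black ∈ y :: w) :
    DecoratedAfterLastBlack (y :: w) ↔ DecoratedAfterLastBlack w := by
  constructor
  · rintro ⟨_ | ⟨z, a⟩, b, hab, hb⟩
    · obtain ⟨rfl, rfl⟩ := List.cons_eq_cons.mp hab
      simp only [List.mem_cons, reduceCtorEq, false_or] at h
      exact absurd h hb
    · exact ⟨a, b, (List.cons_eq_cons.mp hab).2, hb⟩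
  · rintro ⟨a, b, rfl, hb⟩
    exact ⟨y :: a, b, rfl, hb⟩

theorem decoratedAfterLastBlack_iff_of_black_not_mem (hb : Letter.black ∉ w) :
    DecoratedAfterLastBlack w ↔ Letter.decorated ∈ w := by
  constructor
  · rintro ⟨a, b, rfl, -⟩
    simp
  · intro hd
    obtain ⟨a, b, rfl⟩ := List.append_of_mem hd
    exact ⟨a, b, rfl, fun h => hb (by simp [h])⟩

theorem decoratedAfterLastBlack_replicate_append_singleton (k : ℕ) (x : Letter) :
    DecoratedAfterLastBlack (List.replicate k Letter.black ++ [x]) ↔ x = Letter.decorated := by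
  induction k with
  | zero =>
    constructor
    · rintro ⟨_ | ⟨z, a⟩, b, hab, -⟩ <;> simp_all
    · rintro rfl
      exact ⟨[], [], rfl, List.not_mem_nil⟩
  | succ k ih =>
    rw [List.replicate_succ, List.cons_append, decoratedAfterLastBlack_cons List.mem_cons_self, ih]

end DecoratedAfterLastBlack

theorem weight_le_count (w : List Letter) : weight w ≤ w.count Letter.black := by
  have hrun : (w.dropLast.reverse.takeWhile (· = Letter.black)).count Letter.black = weight w :=
    List.count_eq_length.mpr fun b hb => (by simpa using List.mem_takeWhile_imp hb : b = _).symm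
  calc weight w = _ := hrun.symm
    _ ≤ w.dropLast.reverse.count Letter.black := (List.takeWhile_prefix _).count_le _
    _ ≤ w.count Letter.black := by
      rw [List.count_reverse]
      exact (List.dropLast_sublist w).count_le _

theorem weight_cons {y : Letter} {w : List Letter} (hw : w ≠ [])
    (h : y ≠ Letter.black ∨ weight w + 1 < w.length) :
    weight (y :: w) = weight w := by
  unfold weight at h ⊢
  rw [List.dropLast_cons_of_ne_nil hw, List.reverse_cons, List.takeWhile_append]
  split
  case isFalse => rfl
  case isTrue hall =>
    rcases h with hy | hlt
    · simp [hall, hy]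
    · rw [hall, List.length_reverse, List.length_dropLast] at hlt
      omega

theorem weight_replicate_append_singleton (k : ℕ) (x : Letter) :
    weight (List.replicate k Letter.black ++ [x]) = k := by
  rw [weight, List.dropLast_concat, List.reverse_replicate,
    List.takeWhile_eq_self_iff.mpr fun a ha => by simp [List.eq_of_mem_replicate ha],
    List.length_replicate]

section B

variable {n r : ℕ} {w : List Letter}

theorem cons_black_mem_B_iff (hn : n ≠ 0) :
    Letter.black :: w ∈ B (n + 1) (r + 1) ↔ w ∈ B n r := by
  simp only [B, Set.mem_ofPred_eq, List.length_cons, List.count_cons_self, Nat.add_right_cancel_iff]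
  refine and_congr_right fun hl => and_congr_right fun _ => ?_
  rw [List.getLast?_cons_of_ne_nil (List.ne_nil_of_length_pos (by omega))]

theorem cons_mem_B_iff_of_ne_black {y : Letter} (hy : y ≠ Letter.black) (hn : n ≠ 0) :
    y :: w ∈ B (n + 1) r ↔ w ∈ B n r := by
  simp only [B, Set.mem_ofPred_eq, List.length_cons, List.count_cons_of_ne hy,
    Nat.add_right_cancel_iff]
  refine and_congr_right fun hl => and_congr_right fun _ => ?_
  rw [List.getLast?_cons_of_ne_nil (List.ne_nil_of_length_pos (by omega))]

theorem mem_B_succ_self_iff :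
    w ∈ B (n + 1) n ↔ ∃ x, x ≠ Letter.black ∧ w = List.replicate n Letter.black ++ [x] := by
  constructor
  · rintro ⟨hl, hc, hlast⟩
    have hw : w ≠ [] := List.ne_nil_of_length_pos (by omega)
    obtain ⟨l, x, rfl⟩ : ∃ l x, w = l ++ [x] :=
      ⟨w.dropLast, w.getLast hw, (List.dropLast_append_getLast hw).symm⟩
    have hx : x ≠ Letter.black := fun h => hlast (by rw [List.getLast?_concat, h])
    have hll : l.length = n := by simpa using hl
    have hcl : l.count Letter.black = l.length := by
      simpa [List.count_append, List.count_singleton, hx, hll] using hc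
    exact ⟨x, hx, by
      rw [List.eq_replicate_iff.mpr ⟨hll, fun b hb => (List.count_eq_length.mp hcl b hb).symm⟩]⟩
  · rintro ⟨x, hx, rfl⟩
    refine ⟨by simp, by simp [List.count_append, hx], ?_⟩
    simpa using hx

end B

def Bclass (d p : Bool) (n r : ℕ) : Set (List Letter) :=
  {w | w ∈ B n r ∧ (DecoratedAfterLastBlack w ↔ d) ∧ (Odd (weight w) ↔ p)}

section Bclass

variable {d p : Bool} {n r : ℕ}

theorem Bclass_finite : (Bclass d p n r).Finite :=
  (List.finite_length_eq Letter n).subset fun _ hw => hw.1.1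

theorem cons_mem_Bclass_iff {y : Letter} {n' r' : ℕ} {w : List Letter}
    (hB : y :: w ∈ B n' r' ↔ w ∈ B n r)
    (hdec : w ∈ B n r → (DecoratedAfterLastBlack (y :: w) ↔ DecoratedAfterLastBlack w))
    (hweight : w ∈ B n r → weight (y :: w) = weight w) :
    y :: w ∈ Bclass d p n' r' ↔ w ∈ Bclass d p n r := by
  simp only [Bclass, Set.mem_ofPred_eq, hB]
  exact and_congr_right fun hw => by rw [hdec hw, hweight hw]

theorem preimage_cons_black_Bclass (h : r + 1 < n) :
    List.cons Letter.black ⁻¹' Bclass d p (n + 1) (r + 1) = Bclass d p n r := by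
  ext w
  refine cons_mem_Bclass_iff (cons_black_mem_B_iff (by omega))
    (fun _ => decoratedAfterLastBlack_cons List.mem_cons_self) fun hw => ?_
  refine weight_cons (List.ne_nil_of_length_pos (by rw [hw.1]; omega)) (Or.inr ?_)
  have := weight_le_count w
  have := hw.2.1
  rw [hw.1]
  omega

theorem preimage_cons_Bclass_of_ne_black {y : Letter} (hy : y ≠ Letter.black) (h : r + 1 < n) :
    List.cons y ⁻¹' Bclass d p (n + 1) (r + 1) = Bclass d p n (r + 1) := by
  ext w
  refine cons_mem_Bclass_iff (cons_mem_B_iff_of_ne_black hy (by omega)) (fun hw => ?_)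
    fun hw => weight_cons (List.ne_nil_of_length_pos (by rw [hw.1]; omega)) (Or.inl hy)
  refine decoratedAfterLastBlack_cons (List.mem_cons_of_mem _ ?_)
  rw [← List.count_pos_iff, hw.2.1]
  omega

theorem ncard_Bclass_succ (h : r + 1 < n) :
    (Bclass d p (n + 1) (r + 1)).ncard =
      (Bclass d p n r).ncard + 2 * (Bclass d p n (r + 1)).ncard := by
  rw [List.ncard_eq_sum_ncard_preimage_cons Bclass_finite fun hnil => by simpa using hnil.1.1,
    show (univ : Finset Letter) = {.white, .black, .decorated} from rfl,
    sum_insert (by decide), sum_insert (by decide), sum_singleton,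
    preimage_cons_black_Bclass h, preimage_cons_Bclass_of_ne_black (by decide) h,
    preimage_cons_Bclass_of_ne_black (by decide) h]
  ring

theorem Bclass_true_zero : Bclass d true n 0 = ∅ := by
  refine Set.eq_empty_of_forall_notMem fun w ⟨hw, _, hodd⟩ => ?_
  have hweight : weight w = 0 := Nat.le_zero.mp (hw.2.1 ▸ weight_le_count w)
  simp [hweight] at hodd

theorem Bclass_false_false_zero : Bclass false false n 0 = {List.replicate n Letter.white} := by
  ext w
  simp only [Bclass, Set.mem_ofPred_eq, Set.mem_singleton_iff]
  constructor
  · rintro ⟨⟨hl, hc, -⟩, hdec, -⟩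
    have hb : Letter.black ∉ w := List.count_eq_zero.mp hc
    have hd : Letter.decorated ∉ w := fun h => by
      simpa using hdec.mp ((decoratedAfterLastBlack_iff_of_black_not_mem hb).mpr h)
    refine List.eq_replicate_iff.mpr ⟨hl, fun b hbw => ?_⟩
    cases b <;> simp_all
  · rintro rfl
    have hb : Letter.black ∉ List.replicate n Letter.white := by simp [List.mem_replicate]
    have hweight : weight (List.replicate n Letter.white) = 0 :=
      Nat.le_zero.mp (List.count_eq_zero.mpr hb ▸ weight_le_count _)
    refine ⟨⟨by simp, List.count_eq_zero.mpr hb, fun h => hb (List.mem_of_getLast? h)⟩, ?_, ?_⟩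
    · rw [decoratedAfterLastBlack_iff_of_black_not_mem hb]
      simp [List.mem_replicate]
    · simp [hweight]

theorem ncard_Bclass_succ_self : (Bclass d p (n + 1) n).ncard = if (Odd n ↔ p) then 1 else 0 := by
  split_ifs with hp
  · rw [Set.ncard_eq_one]
    refine ⟨List.replicate n Letter.black ++ [cond d Letter.decorated Letter.white], ?_⟩
    ext w
    simp only [Bclass, Set.mem_ofPred_eq, Set.mem_singleton_iff, mem_B_succ_self_iff]
    constructor
    · rintro ⟨⟨x, hx, rfl⟩, hdec, -⟩
      rw [decoratedAfterLastBlack_replicate_append_singleton] at hdec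
      cases d <;> cases x <;> simp_all
    · rintro rfl
      refine ⟨⟨_, by cases d <;> simp, rfl⟩, ?_, ?_⟩
      · rw [decoratedAfterLastBlack_replicate_append_singleton]
        cases d <;> simp
      · rwa [weight_replicate_append_singleton]
  · rw [← Set.ncard_empty (List Letter)]
    refine congrArg _ (Set.eq_empty_of_forall_notMem fun w ⟨hw, _, hodd⟩ => hp ?_)
    obtain ⟨x, -, rfl⟩ := mem_B_succ_self_iff.mp hw
    rwa [weight_replicate_append_singleton] at hodd

end Bclass

theorem ncard_Bclass_true_true {n r : ℕ} (h : r + 1 ≤ n) :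
    ((Bclass true true n r).ncard : ℤ) = (Bclass false false n r).ncard + (-1) ^ (r + 1) := by
  induction n generalizing r with
  | zero => omega
  | succ n ih =>
    obtain _ | r := r
    · simp [Bclass_true_zero, Bclass_false_false_zero]
    obtain rfl | hlt : n = r + 1 ∨ r + 1 < n := by omega
    · rw [ncard_Bclass_succ_self, ncard_Bclass_succ_self]
      rcases Nat.even_or_odd (r + 1) with hr | hr <;> simp [hr]
    · rw [ncard_Bclass_succ hlt, ncard_Bclass_succ hlt]
      push_cast
      linear_combination ih (r := r) (by omega) + 2 * ih (r := r + 1) hlt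

theorem conjugation (n r : ℕ) (h : r + 1 ≤ n) :
    ({w ∈ Bplus n r | Odd (weight w)}.ncard : ℤ) =
      ({w ∈ Bminus n r | Even (weight w)}.ncard : ℤ) + (-1) ^ (r + 1) := by
  have hplus : {w ∈ Bplus n r | Odd (weight w)} = Bclass true true n r := by
    ext w
    simp [Bclass, mem_Bplus_iff_s16, and_assoc]
  have hminus : {w ∈ Bminus n r | Even (weight w)} = Bclass false false n r := by
    ext w
    simp [Bclass, Bminus, mem_Bplus_iff_s16, and_assoc]
    tauto
  rw [hplus, hminus]
  exact ncard_Bclass_true_true h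
end

section
/- For all integers n, r, k with 0 ≤ 2k ≤ r ≤ n−1 and n ≥ 2, the number of arrangements in B(n,r) of weight exactly 2k equals 2^{n−r} · C(n−2−2k, r−2k). -/
/-!
An arrangement of weight `j` in `B n r` is uniquely of the form `u ++ black^j ++ [c]` with
`c` white or decorated and `u ∈ B (n - 1 - j) (r - j)`: maximality of the black run says exactly
that `u` does not end in black. Hence there are `2 * |B (n - 1 - j) (r - j)|` of them. In turn an
element of `B (m + 1) s` is an arbitrary word of length `m` with `s` black letters followed by a
non-black letter, and splitting off the last letter of such a word gives the Pascal recursion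
showing that there are `C(m, s) * 2 ^ (m - s)` of them.
-/

open List Set

namespace List

variable {α : Type*} [DecidableEq α]

theorem rtakeWhile_append_replicate {u : List α} {b : α} (hu : u.getLast? ≠ some b) (j : ℕ) :
    (u ++ replicate j b).rtakeWhile (· = b) = replicate j b := by
  induction j with
  | zero =>
    rcases u.eq_nil_or_concat with rfl | ⟨v, x, rfl⟩
    · simp
    · simpa [rtakeWhile_concat] using hu
  | succ j ih => rw [replicate_succ', ← append_assoc, rtakeWhile_concat_pos _ _ _ (by simp), ih]

theorem exists_eq_append_replicate_rtakeWhile (v : List α) (b : α) :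
    ∃ u : List α, u.getLast? ≠ some b ∧
      v = u ++ replicate (v.rtakeWhile (· = b)).length b := by
  induction v using reverseRecOn with
  | nil => exact ⟨[], by simp⟩
  | append_singleton v x ih =>
    by_cases hx : x = b
    · obtain ⟨u, hu, hv⟩ := ih
      refine ⟨u, hu, ?_⟩
      rw [rtakeWhile_concat_pos _ _ _ (by simpa using hx), length_append, length_singleton,
        replicate_succ', ← append_assoc, ← hv, hx]
    · exact ⟨v ++ [x], by simpa using hx, by simp [hx]⟩

end List

theorem List.encard_image_append_singleton_prod {α : Type*} (S : Set (List α)) (T : Set α) :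
    ((fun p : List α × α => p.1 ++ [p.2]) '' S ×ˢ T).encard = S.encard * T.encard := by
  rw [InjOn.encard_image fun p _ q _ h => ?_, encard_prod]
  obtain ⟨h1, h2⟩ := append_inj' h rfl
  exact Prod.ext h1 (by simpa using h2)

theorem Nat.choose_mul_two_pow_succ_sub (m s : ℕ) :
    m.choose s * 2 ^ (m + 1 - s) = 2 * (m.choose s * 2 ^ (m - s)) := by
  rcases le_or_gt s m with h | h
  · rw [Nat.sub_add_comm h, pow_succ]; ring
  · simp [Nat.choose_eq_zero_of_lt h]

theorem Nat.succ_choose_succ_mul_two_pow (m s : ℕ) :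
    (m + 1).choose (s + 1) * 2 ^ (m - s) =
      2 * (m.choose (s + 1) * 2 ^ (m - (s + 1))) + m.choose s * 2 ^ (m - s) := by
  rw [← Nat.choose_mul_two_pow_succ_sub, Nat.add_sub_add_right, Nat.choose_succ_succ', add_mul,
    add_comm]

open Letter

namespace Arrangement

def nonBlack : Set Letter := {white, decorated}

theorem encard_nonBlack : nonBlack.encard = 2 := encard_pair (by decide)

theorem mem_nonBlack {c : Letter} : c ∈ nonBlack ↔ c ≠ black := by
  cases c <;> simp [nonBlack]

def words (m s : ℕ) : Set (List Letter) := {w | w.length = m ∧ w.count black = s}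

theorem B_zero_left (s : ℕ) : B 0 s = words 0 s := by
  ext w
  simp +contextual [B, words]

theorem B_zero_right (m : ℕ) : B m 0 = words m 0 := by
  ext w
  refine ⟨fun h => ⟨h.1, h.2.1⟩, fun ⟨hl, hc⟩ => ⟨hl, hc, fun h => ?_⟩⟩
  exact (count_pos_iff.mpr (mem_of_getLast? h)).ne' hc

theorem B_succ (m s : ℕ) : B (m + 1) s = (fun p => p.1 ++ [p.2]) '' words m s ×ˢ nonBlack := by
  ext w
  rcases w.eq_nil_or_concat with rfl | ⟨v, c, rfl⟩
  · simp [B]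
  · by_cases hc : c = black <;> simp [B, words, mem_nonBlack, hc]

theorem words_succ_succ (m s : ℕ) :
    words (m + 1) (s + 1) = B (m + 1) (s + 1) ∪ (· ++ [black]) '' words m s := by
  ext w
  rcases w.eq_nil_or_concat with rfl | ⟨v, c, rfl⟩
  · simp [B, words]
  · cases c <;> simp [B, words]

theorem encard_B_succ (m s : ℕ) : (B (m + 1) s).encard = 2 * (words m s).encard := by
  rw [B_succ, encard_image_append_singleton_prod, encard_nonBlack, mul_comm]

theorem encard_words (m s : ℕ) : (words m s).encard = (m.choose s * 2 ^ (m - s) : ℕ) := by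
  induction m generalizing s with
  | zero =>
    cases s
    · exact encard_eq_one.mpr ⟨[], by ext w; simp +contextual [words]⟩
    · simp +contextual [words, eq_empty_iff_forall_notMem]
  | succ m ih =>
    cases s with
    | zero => rw [← B_zero_right, encard_B_succ, ih]; simp [pow_succ, mul_comm]
    | succ s =>
      have hdisj : Disjoint (B (m + 1) (s + 1)) ((· ++ [black]) '' words m s) := by
        rw [Set.disjoint_left]
        rintro _ ⟨-, -, h⟩ ⟨v, -, rfl⟩
        simp at h
      rw [words_succ_succ, encard_union_eq hdisj, encard_B_succ,
        append_left_injective _ |>.encard_image, ih, ih, Nat.add_sub_add_right,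
        Nat.succ_choose_succ_mul_two_pow]
      push_cast
      ring

theorem encard_B (m s : ℕ) : (B m s).encard = (2 ^ (m - s) * (m - 1).choose s : ℕ) := by
  cases m with
  | zero => simp [B_zero_left, encard_words]
  | succ m =>
    rw [encard_B_succ, encard_words, add_tsub_cancel_right, mul_comm (2 ^ _),
      Nat.choose_mul_two_pow_succ_sub]
    push_cast
    ring

theorem weight_eq_length_rtakeWhile (w : List Letter) :
    weight w = (w.dropLast.rtakeWhile (· = black)).length := by
  simp [weight, rtakeWhile]

theorem weight_append_replicate_append_singleton {u : List Letter}
    (hu : u.getLast? ≠ some black) (j : ℕ) (c : Letter) :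
    weight (u ++ replicate j black ++ [c]) = j := by
  rw [weight_eq_length_rtakeWhile, dropLast_concat, rtakeWhile_append_replicate hu,
    length_replicate]

theorem exists_eq_append_replicate_weight {w : List Letter} (hw : w ≠ []) :
    ∃ u c, u.getLast? ≠ some black ∧ w = u ++ replicate (weight w) black ++ [c] := by
  obtain ⟨u, hu, h⟩ := exists_eq_append_replicate_rtakeWhile w.dropLast black
  refine ⟨u, w.getLast hw, hu, ?_⟩
  rw [weight_eq_length_rtakeWhile, ← h, dropLast_append_getLast]

theorem setOf_weight_eq {n r j : ℕ} (hj : j ≤ r) (hr : r < n) :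
    {w ∈ B n r | weight w = j} =
      (fun p => p.1 ++ [p.2]) '' ((· ++ replicate j black) '' B (n - 1 - j) (r - j)) ×ˢ
        nonBlack := by
  ext w
  constructor
  · rintro ⟨⟨hl, hc, hlast⟩, hwj⟩
    obtain ⟨u, c, hu, hw⟩ :=
      exists_eq_append_replicate_weight (w := w) (ne_nil_of_length_pos (by omega))
    obtain rfl : w = u ++ replicate j black ++ [c] := hwj ▸ hw
    rw [getLast?_concat, Ne, Option.some_inj] at hlast
    simp only [length_append, length_replicate, length_singleton] at hl
    simp only [count_append, count_replicate_self, count_singleton', if_neg hlast] at hc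
    exact ⟨⟨u ++ replicate j black, c⟩, ⟨⟨u, ⟨by omega, by omega, hu⟩, rfl⟩,
      mem_nonBlack.mpr hlast⟩, rfl⟩
  · rintro ⟨⟨-, c⟩, ⟨⟨u, ⟨hl, hc, hu⟩, rfl⟩, hc'⟩, rfl⟩
    rw [mem_nonBlack] at hc'
    refine ⟨⟨?_, ?_, ?_⟩, weight_append_replicate_append_singleton hu j c⟩
    · simp only [length_append, length_replicate, length_singleton]; omega
    · simp only [count_append, count_replicate_self, count_singleton', if_neg hc']
      omega
    · simpa using hc'

theorem ncard_setOf_weight_eq {n r j : ℕ} (hj : j ≤ r) (hr : r < n) :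
    {w ∈ B n r | weight w = j}.ncard = 2 ^ (n - r) * (n - 2 - j).choose (r - j) := by
  rw [ncard_def, setOf_weight_eq hj hr, encard_image_append_singleton_prod,
    append_left_injective _ |>.encard_image, encard_B, encard_nonBlack]
  have hsub : n - 1 - j - (r - j) = n - 1 - r := by omega
  have hlen : n - 1 - j - 1 = n - 2 - j := by omega
  have hpow : n - r = n - 1 - r + 1 := by omega
  rw [hsub, hlen]
  norm_cast
  rw [ENat.toNat_natCast, hpow, pow_succ]
  ring

end Arrangement

theorem card_weight_eq_general (n r k : ℕ) (h1 : 2 * k ≤ r) (h2 : r + 1 ≤ n) :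
    {w ∈ B n r | weight w = 2 * k}.ncard = 2 ^ (n - r) * (n - 2 - 2 * k).choose (r - 2 * k) :=
  Arrangement.ncard_setOf_weight_eq h1 h2

theorem card_weight_eq (n r k : ℕ) (h1 : 2 * k ≤ r) (h2 : r + 1 ≤ n) (h3 : 2 ≤ n) :
    {w ∈ B n r | weight w = 2 * k}.ncard = 2 ^ (n - r) * (n - 2 - 2 * k).choose (r - 2 * k) :=
  card_weight_eq_general n r k h1 h2
end
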